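/- arXiv:1010.2127 — 5 statements merged into one kernel-verified Lean document; each statement's English description precedes it below -/
import Mathlib

section
/- Let (u, v) be a nonnegative solution of the radial system (S) on (r0, R), 0 ≤ r0 < R < ∞, such that u or v is unbounded on every left neighborhood of R. Then lim_{r→R} u(r) = lim_{r→R} v(r) = lim_{r→R} u'(r) = lim_{r→R} v'(r) = +∞, and there exist C > 0 and ρ ∈ (r0, R) such that for all r ∈ (ρ, R): u(r) ≤ C·(R−r)^{−γ} and v(r) ≤ C·(R−r)^{−ξ}. -/
/-!
Write `φ_u = r ^ (N - 1) * u'`, so that the system reads `φ_u' = r ^ (N - 1) * r ^ a * v ^ δ` and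
`φ_v' = r ^ (N - 1) * r ^ b * u ^ μ`; both fluxes are nondecreasing. If one component stayed bounded
near `R`, integrating the other's flux equation twice would bound the other as well, so both are
unbounded. Then some flux becomes positive, after which `u` and `v` increase and tend to `+∞`, and
so do the fluxes and hence `u'` and `v'`.

For the rate, integrating twice from a point `x`, first for `v` using `u ≥ u x` and then for `u`,
gives `u y ≥ u x + c * u x ^ (μ * δ) * (y - x) ^ (2 * δ + 2)`. So `u` doubles over a step of length
`Θ * u x ^ (-1 / γ)`; these steps shrink geometrically, and if `R - x` exceeded their sum
`Θ' * u x ^ (-1 / γ)`, then `u` would be infinite before `R`. Hence `u x ≤ Θ' ^ γ * (R - x) ^ (-γ)`,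
and symmetrically for `v`.
-/

open Real Set Filter

/-- `(u, v)` is a solution of the radial system
`u'' + ((N-1)/r) u' = r^a v^δ`, `v'' + ((N-1)/r) v' = r^b u^μ` on the set `I ⊆ (0,∞)`. -/
def RadialSystem (N : ℕ) (a b δ μ : ℝ) (u v : ℝ → ℝ) (I : Set ℝ) : Prop :=
  ContDiffOn ℝ 2 u I ∧ ContDiffOn ℝ 2 v I ∧
  ∀ r ∈ I,
    deriv (deriv u) r + (((N : ℝ) - 1) / r) * deriv u r = r ^ a * v r ^ δ ∧
    deriv (deriv v) r + (((N : ℝ) - 1) / r) * deriv v r = r ^ b * u r ^ μ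

open Topology

theorem monotoneOn_of_hasDerivAt_nonneg {D : Set ℝ} (hD : Convex ℝ D) {f f' : ℝ → ℝ}
    (hf : ∀ x ∈ D, HasDerivAt f (f' x) x) (hf' : ∀ x ∈ interior D, 0 ≤ f' x) :
    MonotoneOn f D :=
  monotoneOn_of_hasDerivWithinAt_nonneg hD (fun x hx => (hf x hx).continuousAt.continuousWithinAt)
    (fun x hx => (hf x (interior_subset hx)).hasDerivWithinAt) hf'

theorem le_of_hasDerivAt_le_of_le {F G F' G' : ℝ → ℝ} {s R : ℝ}
    (hF : ∀ r ∈ Ico s R, HasDerivAt F (F' r) r) (hG : ∀ r ∈ Ico s R, HasDerivAt G (G' r) r)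
    (hle : ∀ r ∈ Ioo s R, F' r ≤ G' r) (hs : F s ≤ G s) {r : ℝ} (hr : r ∈ Ico s R) :
    F r ≤ G r := by
  have hmono : MonotoneOn (fun x => G x - F x) (Ico s R) :=
    monotoneOn_of_hasDerivAt_nonneg (convex_Ico s R) (fun x hx => (hG x hx).sub (hF x hx))
      (by simpa only [interior_Ico, sub_nonneg] using hle)
  have := hmono (left_mem_Ico.2 (hr.1.trans_lt hr.2)) hr hr.1
  linarith

theorem hasDerivAt_div_mul_sub_rpow (A x p r : ℝ) (hp : 0 ≤ p) :
    HasDerivAt (fun y => A / (p + 1) * (y - x) ^ (p + 1)) (A * (r - x) ^ p) r := by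
  have h := (((hasDerivAt_id r).sub_const x).rpow_const (p := p + 1)
    (Or.inr (by linarith))).const_mul (A / (p + 1))
  refine h.congr_deriv ?_
  have : p + 1 ≠ 0 := by positivity
  simp only [id_eq, add_sub_cancel_right]
  field_simp

theorem bddAbove_image_Ico_of_deriv_le {g g' : ℝ → ℝ} {s R C : ℝ}
    (hg : ∀ r ∈ Ico s R, HasDerivAt g (g' r) r) (hC : ∀ r ∈ Ioo s R, g' r ≤ C) :
    BddAbove (g '' Ico s R) := by
  refine ⟨g s + max C 0 * (R - s), ?_⟩
  rintro _ ⟨r, hr, rfl⟩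
  have hline : ∀ y, HasDerivAt (fun y => g s + max C 0 * (y - s)) (max C 0) y := fun y => by
    simpa using (((hasDerivAt_id y).sub_const s).const_mul (max C 0)).const_add (g s)
  have := le_of_hasDerivAt_le_of_le hg (fun y _ => hline y)
    (fun y hy => (hC y hy).trans (le_max_left C 0)) (by simp) hr
  nlinarith [le_max_right C 0, hr.2]

theorem MonotoneOn.tendsto_nhdsLT_atTop {g : ℝ → ℝ} {s R : ℝ} (hg : MonotoneOn g (Ico s R))
    (hunb : ¬ BddAbove (g '' Ioo s R)) : Tendsto g (𝓝[<] R) atTop := by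
  refine tendsto_atTop.2 fun K => ?_
  obtain ⟨_, ⟨x, hx, rfl⟩, hKx⟩ := not_bddAbove_iff.1 hunb K
  filter_upwards [Ioo_mem_nhdsLT hx.2] with r hr
  exact hKx.le.trans (hg (Ioo_subset_Ico_self hx) ⟨hx.1.le.trans hr.1.le, hr.2⟩ hr.1.le)

theorem exists_mem_Ioo_forall_of_eventually_nhdsLT {p : ℝ → Prop} {r0 R : ℝ} (hr0R : r0 < R)
    (h : ∀ᶠ r in 𝓝[<] R, p r) : ∃ ρ ∈ Ioo r0 R, ∀ r ∈ Ioo ρ R, p r := by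
  obtain ⟨l, hl, hsub⟩ := (mem_nhdsLT_iff_exists_mem_Ico_Ioo_subset hr0R).1 h
  exact ⟨(l + R) / 2, ⟨by linarith [hl.1, hl.2], by linarith [hl.2]⟩,
    fun r hr => hsub ⟨by linarith [hr.1, hl.2], hr.2⟩⟩

noncomputable def radialFlux (N : ℕ) (g : ℝ → ℝ) (r : ℝ) : ℝ := r ^ (N - 1) * deriv g r

theorem hasDerivAt_radialFlux {N : ℕ} (hN : 1 ≤ N) {g : ℝ → ℝ} {r : ℝ} (hr : 0 < r)
    (hg : HasDerivAt (deriv g) (deriv (deriv g) r) r) :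
    HasDerivAt (radialFlux N g)
      (r ^ (N - 1) * (deriv (deriv g) r + ((N : ℝ) - 1) / r * deriv g r)) r := by
  refine ((hasDerivAt_pow (N - 1) r).mul hg).congr_deriv ?_
  obtain ⟨n, rfl⟩ : ∃ n, N = n + 1 := ⟨N - 1, by omega⟩
  rcases n with _ | n
  · simp
  · simp only [add_tsub_cancel_right, Nat.cast_add, Nat.cast_one, pow_succ]
    field_simp
    ring

theorem deriv_eq_radialFlux_div {N : ℕ} {g : ℝ → ℝ} {r : ℝ} (hr : 0 < r) :
    deriv g r = radialFlux N g r / r ^ (N - 1) := by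
  rw [radialFlux, mul_div_cancel_left₀ _ (pow_pos hr _).ne']

theorem radialFlux_div_pow_le_deriv {N : ℕ} {g : ℝ → ℝ} {r R : ℝ} (hr : 0 < r) (hrR : r ≤ R)
    (hφ : 0 ≤ radialFlux N g r) : radialFlux N g r / R ^ (N - 1) ≤ deriv g r := by
  rw [deriv_eq_radialFlux_div hr]
  exact div_le_div_of_nonneg_left hφ (pow_pos hr _) (pow_le_pow_left₀ hr.le hrR _)

theorem monotoneOn_of_radialFlux_nonneg {N : ℕ} {g : ℝ → ℝ} {s R : ℝ} (hs : 0 < s)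
    (hg : ∀ r ∈ Ico s R, HasDerivAt g (deriv g r) r)
    (hφ : ∀ r ∈ Ioo s R, 0 ≤ radialFlux N g r) : MonotoneOn g (Ico s R) :=
  monotoneOn_of_hasDerivAt_nonneg (convex_Ico s R) hg fun r hr => by
    rw [interior_Ico] at hr
    rw [deriv_eq_radialFlux_div (N := N) (hs.trans hr.1)]
    exact div_nonneg (hφ r hr) (pow_nonneg (hs.trans hr.1).le _)

theorem bddAbove_image_Ico_of_radialFlux {N : ℕ} {g : ℝ → ℝ} {s R : ℝ} (hs : 0 < s)
    (hg : ∀ r ∈ Ico s R, HasDerivAt g (deriv g r) r)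
    (hφ : BddAbove (radialFlux N g '' Ico s R)) : BddAbove (g '' Ico s R) := by
  obtain ⟨L, hL⟩ := hφ
  refine bddAbove_image_Ico_of_deriv_le hg (C := max L 0 / s ^ (N - 1)) fun r hr => ?_
  have hr0 : 0 < r := hs.trans hr.1
  rw [deriv_eq_radialFlux_div (N := N) hr0]
  calc radialFlux N g r / r ^ (N - 1) ≤ max L 0 / r ^ (N - 1) := by
        gcongr
        exact (hL (mem_image_of_mem _ (Ioo_subset_Ico_self hr))).trans (le_max_left L 0)
    _ ≤ max L 0 / s ^ (N - 1) := by
        gcongr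
        exact hr.1.le

theorem add_le_of_radialFlux_deriv_ge {N : ℕ} {g Φ : ℝ → ℝ} {x R A p : ℝ} (hx : 0 < x)
    (hA : 0 ≤ A) (hp : 0 ≤ p)
    (hg : ∀ r ∈ Ico x R, HasDerivAt g (deriv g r) r)
    (hΦ : ∀ r ∈ Ico x R, HasDerivAt (radialFlux N g) (Φ r) r)
    (hΦA : ∀ r ∈ Ioo x R, A * (r - x) ^ p ≤ Φ r) (hφx : 0 ≤ radialFlux N g x)
    {r : ℝ} (hr : r ∈ Ico x R) :
    g x + A / ((p + 1) * (p + 2) * R ^ (N - 1)) * (r - x) ^ (p + 2) ≤ g r := by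
  have hR : 0 < R := hx.trans_le (hr.1.trans hr.2.le)
  have hflux : ∀ r ∈ Ico x R, A / (p + 1) * (r - x) ^ (p + 1) ≤ radialFlux N g r :=
    fun r hr => le_of_hasDerivAt_le_of_le (fun y _ => hasDerivAt_div_mul_sub_rpow A x p y hp)
      hΦ hΦA (by rwa [sub_self, zero_rpow (by positivity), mul_zero]) hr
  have hderiv : ∀ r ∈ Ioo x R, A / (p + 1) / R ^ (N - 1) * (r - x) ^ (p + 1) ≤ deriv g r := by
    intro r hr
    have hflux_r := hflux r (Ioo_subset_Ico_self hr)
    have hrx : 0 ≤ A / (p + 1) * (r - x) ^ (p + 1) := by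
      have := hr.1.le; have : 0 ≤ r - x := by linarith
      positivity
    calc A / (p + 1) / R ^ (N - 1) * (r - x) ^ (p + 1)
        = A / (p + 1) * (r - x) ^ (p + 1) / R ^ (N - 1) := by ring
      _ ≤ radialFlux N g r / R ^ (N - 1) := by gcongr
      _ ≤ deriv g r := radialFlux_div_pow_le_deriv (hx.trans hr.1) hr.2.le (hrx.trans hflux_r)
  have := le_of_hasDerivAt_le_of_le
    (fun y _ => (hasDerivAt_div_mul_sub_rpow (A / (p + 1) / R ^ (N - 1)) x (p + 1) y
      (by linarith)).const_add (g x)) hg hderiv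
    (by rw [sub_self, zero_rpow (by positivity), mul_zero, add_zero]) hr
  convert this using 3
  · rw [div_div, div_div]
    ring_nf
  · ring_nf

def GrowsSuperlinearly (u : ℝ → ℝ) (t R c k q : ℝ) : Prop :=
  ∀ x ∈ Ico t R, ∀ y ∈ Ico x R, u x + c * u x ^ k * (y - x) ^ q ≤ u y

namespace GrowsSuperlinearly

variable {u : ℝ → ℝ} {t R c k q : ℝ}

theorem monotoneOn (h : GrowsSuperlinearly u t R c k q) (hc : 0 ≤ c)
    (hu : ∀ x ∈ Ico t R, 0 ≤ u x) : MonotoneOn u (Ico t R) := by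
  intro x hx y hy hxy
  have hux := hu x hx
  have hyx : 0 ≤ y - x := sub_nonneg.2 hxy
  have := h x hx y ⟨hxy, hy.2⟩
  have : 0 ≤ c * u x ^ k * (y - x) ^ q := by positivity
  linarith

theorem two_mul_le (h : GrowsSuperlinearly u t R c k q) (hc : 0 < c) (hq : q ≠ 0) {x : ℝ}
    (hx : x ∈ Ico t R) (hux : 0 < u x)
    (hxR : x + c ^ (-1 / q) * u x ^ (-((k - 1) / q)) < R) :
    2 * u x ≤ u (x + c ^ (-1 / q) * u x ^ (-((k - 1) / q))) := by
  have hgain : c * u x ^ k * (c ^ (-1 / q) * u x ^ (-((k - 1) / q))) ^ q = u x := by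
    rw [mul_rpow (by positivity) (by positivity), ← rpow_mul hc.le, ← rpow_mul hux.le,
      show -1 / q * q = -1 by field_simp, show -((k - 1) / q) * q = -(k - 1) by field_simp,
      rpow_neg_one, rpow_neg hux.le, rpow_sub hux, rpow_one]
    field_simp
  have := h x hx _ ⟨le_add_of_nonneg_right (by positivity), hxR⟩
  rw [add_sub_cancel_left, hgain] at this
  linarith

/-- After each doubling of `u` (`two_mul_le`) the next doubling step is shorter by the factor
`2 ^ (-((k - 1) / q))`; `Θ'` is the geometric sum of these step factors. -/
theorem pow_two_mul_le (h : GrowsSuperlinearly u t R c k q) (hc : 0 < c) (hk : 1 < k) (hq : 0 < q)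
    (hu : ∀ x ∈ Ico t R, 0 < u x) {Θ' : ℝ} (hΘ'pos : 0 < Θ')
    (hΘ' : c ^ (-1 / q) + Θ' * 2 ^ (-((k - 1) / q)) = Θ') (n : ℕ) {x : ℝ} (hx : x ∈ Ico t R)
    (hxR : x + Θ' * u x ^ (-((k - 1) / q)) < R) :
    2 ^ n * u x ≤ u (x + Θ' * u x ^ (-((k - 1) / q))) := by
  set s := (k - 1) / q
  have hmono := h.monotoneOn hc.le fun x hx => (hu x hx).le
  induction n generalizing x with
  | zero =>
    have := (hu x hx).le
    simpa using hmono hx ⟨hx.1.trans (le_add_of_nonneg_right (by positivity)), hxR⟩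
      (le_add_of_nonneg_right (by positivity))
  | succ n ih =>
    have hux := hu x hx
    set x₁ := x + c ^ (-1 / q) * u x ^ (-s)
    have hx₁y : x₁ ≤ x + Θ' * u x ^ (-s) := by
      have := rpow_pos_of_pos hux (-s)
      have : c ^ (-1 / q) ≤ Θ' := by
        linarith [mul_pos hΘ'pos (rpow_pos_of_pos two_pos (-s))]
      simp only [x₁]
      gcongr
    have hx₁ : x₁ ∈ Ico t R :=
      ⟨hx.1.trans (le_add_of_nonneg_right (by positivity)), hx₁y.trans_lt hxR⟩
    have hdouble : 2 * u x ≤ u x₁ := h.two_mul_le hc hq.ne' hx hux (hx₁y.trans_lt hxR)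
    have hτ : u x₁ ^ (-s) ≤ 2 ^ (-s) * u x ^ (-s) := by
      rw [← mul_rpow zero_lt_two.le hux.le]
      have : 0 < s := div_pos (by linarith) hq
      exact rpow_le_rpow_of_nonpos (by positivity) hdouble (by linarith)
    have hy₁ : x₁ + Θ' * u x₁ ^ (-s) ≤ x + Θ' * u x ^ (-s) := by
      calc x₁ + Θ' * u x₁ ^ (-s) ≤ x₁ + Θ' * (2 ^ (-s) * u x ^ (-s)) := by gcongr
        _ = x + Θ' * u x ^ (-s) := by linear_combination u x ^ (-s) * hΘ'
    have hy₁t : t ≤ x₁ + Θ' * u x₁ ^ (-s) :=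
      hx₁.1.trans (le_add_of_nonneg_right (by have := hu x₁ hx₁; positivity))
    calc 2 ^ (n + 1) * u x = 2 ^ n * (2 * u x) := by ring
      _ ≤ 2 ^ n * u x₁ := by gcongr
      _ ≤ u (x₁ + Θ' * u x₁ ^ (-s)) := ih hx₁ (hy₁.trans_lt hxR)
      _ ≤ u (x + Θ' * u x ^ (-s)) :=
        hmono ⟨hy₁t, hy₁.trans_lt hxR⟩ ⟨hy₁t.trans hy₁, hxR⟩ hy₁

theorem le_mul_rpow (h : GrowsSuperlinearly u t R c k q) (hc : 0 < c) (hk : 1 < k) (hq : 0 < q)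
    (hu : ∀ x ∈ Ico t R, 0 < u x) :
    ∃ C > 0, ∀ x ∈ Ico t R, u x ≤ C * (R - x) ^ (-(q / (k - 1))) := by
  set s := (k - 1) / q with hs_def
  have hs : 0 < s := div_pos (by linarith) hq
  have hω : (2 : ℝ) ^ (-s) < 1 := rpow_lt_one_of_one_lt_of_neg one_lt_two (neg_neg_of_pos hs)
  set Θ' := c ^ (-1 / q) / (1 - 2 ^ (-s))
  have hΘ' : 0 < Θ' := div_pos (rpow_pos_of_pos hc _) (sub_pos.2 hω)
  have hΘ'sum : c ^ (-1 / q) + Θ' * 2 ^ (-s) = Θ' := by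
    simp only [Θ']
    field_simp [(sub_pos.2 hω).ne']
    ring
  refine ⟨Θ' ^ (q / (k - 1)), rpow_pos_of_pos hΘ' _, fun x hx => ?_⟩
  have hux := hu x hx
  have hRx : 0 < R - x := sub_pos.2 hx.2
  have hreach : R - x ≤ Θ' * u x ^ (-s) := by
    by_contra! hlt
    obtain ⟨n, hn⟩ := pow_unbounded_of_one_lt (u (x + Θ' * u x ^ (-s)) / u x) one_lt_two
    rw [div_lt_iff₀ hux] at hn
    linarith [h.pow_two_mul_le hc hk hq hu hΘ' hΘ'sum n hx (by linarith)]
  have hpow : (R - x) ^ (q / (k - 1)) ≤ Θ' ^ (q / (k - 1)) * (u x)⁻¹ := by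
    calc (R - x) ^ (q / (k - 1)) ≤ (Θ' * u x ^ (-s)) ^ (q / (k - 1)) := by gcongr
      _ = Θ' ^ (q / (k - 1)) * (u x)⁻¹ := by
        rw [mul_rpow hΘ'.le (by positivity), ← rpow_mul hux.le,
          show -s * (q / (k - 1)) = -1 by
            rw [hs_def]; field_simp [(show k - 1 ≠ 0 by linarith), hq.ne'], rpow_neg_one]
  rw [rpow_neg hRx.le, ← div_eq_mul_inv, le_div_iff₀ (rpow_pos_of_pos hRx _)]
  calc u x * (R - x) ^ (q / (k - 1)) ≤ u x * (Θ' ^ (q / (k - 1)) * (u x)⁻¹) := by gcongr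
    _ = Θ' ^ (q / (k - 1)) := by field_simp

end GrowsSuperlinearly

theorem exists_pos_forall_le_pow_mul_rpow {t R : ℝ} (ht : 0 < t) (htR : t ≤ R) (n : ℕ) (e : ℝ) :
    ∃ m > 0, ∀ r ∈ Icc t R, m ≤ r ^ n * r ^ e := by
  refine ⟨t ^ n * min (t ^ e) (R ^ e),
    by have := rpow_pos_of_pos (ht.trans_le htR) e; positivity, fun r hr => ?_⟩
  have hmin : min (t ^ e) (R ^ e) ≤ r ^ e := by
    rcases le_or_gt 0 e with he | he
    · exact (min_le_left _ _).trans (rpow_le_rpow ht.le hr.1 he)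
    · exact (min_le_right _ _).trans (rpow_le_rpow_of_nonpos (ht.trans_le hr.1) hr.2 he.le)
  exact mul_le_mul (pow_le_pow_left₀ ht.le hr.1 n) hmin
    (le_min (rpow_pos_of_pos ht e).le (rpow_pos_of_pos (ht.trans_le htR) e).le)
    (pow_nonneg (ht.le.trans hr.1) n)

theorem exists_forall_pow_mul_rpow_le {t R : ℝ} (ht : 0 < t) (n : ℕ) (e : ℝ) :
    ∃ B, ∀ r ∈ Icc t R, r ^ n * r ^ e ≤ B := by
  refine ⟨R ^ n * max (t ^ e) (R ^ e), fun r hr => ?_⟩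
  have hmax : r ^ e ≤ max (t ^ e) (R ^ e) := by
    rcases le_or_gt 0 e with he | he
    · exact (rpow_le_rpow (ht.le.trans hr.1) hr.2 he).trans (le_max_right _ _)
    · exact (rpow_le_rpow_of_nonpos ht hr.1 he.le).trans (le_max_left _ _)
  have := ht.trans_le hr.1
  have := ht.trans_le (hr.1.trans hr.2)
  gcongr
  exact hr.2

theorem exists_growsSuperlinearly {N : ℕ} {u v Φu Φv : ℝ → ℝ} {t R ma mb δ μ : ℝ}
    (ht : 0 < t) (htR : t < R) (hma : 0 < ma) (hmb : 0 < mb) (hδ : 0 ≤ δ) (hμ : 0 ≤ μ)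
    (hu : ∀ r ∈ Ico t R, HasDerivAt u (deriv u r) r)
    (hv : ∀ r ∈ Ico t R, HasDerivAt v (deriv v r) r)
    (hΦu : ∀ r ∈ Ico t R, HasDerivAt (radialFlux N u) (Φu r) r)
    (hΦv : ∀ r ∈ Ico t R, HasDerivAt (radialFlux N v) (Φv r) r)
    (hΦu_ge : ∀ r ∈ Ico t R, ma * v r ^ δ ≤ Φu r) (hΦv_ge : ∀ r ∈ Ico t R, mb * u r ^ μ ≤ Φv r)
    (hu0 : ∀ r ∈ Ico t R, 0 ≤ u r) (hv0 : ∀ r ∈ Ico t R, 0 ≤ v r)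
    (hφu : ∀ r ∈ Ico t R, 0 ≤ radialFlux N u r) (hφv : ∀ r ∈ Ico t R, 0 ≤ radialFlux N v r) :
    ∃ c > 0, GrowsSuperlinearly u t R c (μ * δ) (2 * δ + 2) := by
  have hR : 0 < R := ht.trans htR
  have hmono : MonotoneOn u (Ico t R) :=
    monotoneOn_of_radialFlux_nonneg ht hu fun r hr => hφu r (Ioo_subset_Ico_self hr)
  set m := mb / (2 * R ^ (N - 1))
  refine ⟨ma * m ^ δ / ((2 * δ + 1) * (2 * δ + 2) * R ^ (N - 1)), by positivity, ?_⟩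
  intro x hx y hy
  have hx0 : 0 < x := ht.trans_le hx.1
  have hsub : Ico x R ⊆ Ico t R := Ico_subset_Ico_left hx.1
  have hux := hu0 x hx
  have hv_ge : ∀ r ∈ Ico x R, m * u x ^ μ * (r - x) ^ (2 : ℝ) ≤ v r := by
    intro r hr
    have hgrowth := add_le_of_radialFlux_deriv_ge (A := mb * u x ^ μ) (p := 0) hx0 (by positivity)
      le_rfl (fun r hr => hv r (hsub hr)) (fun r hr => hΦv r (hsub hr))
      (fun r hr => by
        rw [rpow_zero, mul_one]
        have hr' := hsub (Ioo_subset_Ico_self hr)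
        calc mb * u x ^ μ ≤ mb * u r ^ μ := by gcongr; exact hmono hx hr' hr.1.le
          _ ≤ Φv r := hΦv_ge r hr')
      (hφv x hx) hr
    have hcoef : mb * u x ^ μ / ((0 + 1) * (0 + 2) * R ^ (N - 1)) * (r - x) ^ ((0 : ℝ) + 2)
        = m * u x ^ μ * (r - x) ^ (2 : ℝ) := by
      simp only [m, zero_add, one_mul]
      ring
    linarith [hv0 x hx]
  have hmu : 0 ≤ m * u x ^ μ := by positivity
  have hgrowth := add_le_of_radialFlux_deriv_ge (A := ma * (m * u x ^ μ) ^ δ) (p := 2 * δ) hx0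
    (by positivity) (by positivity) (fun r hr => hu r (hsub hr)) (fun r hr => hΦu r (hsub hr))
    (fun r hr => by
      have hrx : 0 ≤ r - x := sub_nonneg.2 hr.1.le
      calc ma * (m * u x ^ μ) ^ δ * (r - x) ^ (2 * δ)
          = ma * (m * u x ^ μ * (r - x) ^ (2 : ℝ)) ^ δ := by
            rw [mul_rpow hmu (by positivity), ← rpow_mul hrx, mul_assoc]
        _ ≤ ma * v r ^ δ := by gcongr; exact hv_ge r (Ioo_subset_Ico_self hr)
        _ ≤ Φu r := hΦu_ge r (hsub (Ioo_subset_Ico_self hr)))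
    (hφu x hx) hy
  have hcoef : ma * m ^ δ / ((2 * δ + 1) * (2 * δ + 2) * R ^ (N - 1)) * u x ^ (μ * δ)
      = ma * (m * u x ^ μ) ^ δ / ((2 * δ + 1) * (2 * δ + 2) * R ^ (N - 1)) := by
    rw [mul_rpow (by positivity) (by positivity), ← rpow_mul hux]
    ring
  rwa [hcoef]

namespace RadialSystem

variable {N : ℕ} {a b δ μ r0 R : ℝ} {u v : ℝ → ℝ}

theorem swap {I : Set ℝ} (h : RadialSystem N a b δ μ u v I) : RadialSystem N b a μ δ v u I :=
  ⟨h.2.1, h.1, fun r hr => (h.2.2 r hr).symm⟩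

theorem hasDerivAt (h : RadialSystem N a b δ μ u v (Ioo r0 R)) {r : ℝ} (hr : r ∈ Ioo r0 R) :
    HasDerivAt u (deriv u r) r :=
  ((h.1.differentiableOn (by norm_num) r hr).differentiableAt
    (isOpen_Ioo.mem_nhds hr)).hasDerivAt

theorem hasDerivAt_radialFlux (hN : 1 ≤ N) (hr0 : 0 ≤ r0)
    (h : RadialSystem N a b δ μ u v (Ioo r0 R)) {r : ℝ} (hr : r ∈ Ioo r0 R) :
    HasDerivAt (radialFlux N u) (r ^ (N - 1) * (r ^ a * v r ^ δ)) r := by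
  have hd : DifferentiableOn ℝ (deriv u) (Ioo r0 R) :=
    (h.1.deriv_of_isOpen isOpen_Ioo (m := 1) le_rfl).differentiableOn one_ne_zero
  rw [← (h.2.2 r hr).1]
  exact _root_.hasDerivAt_radialFlux hN (hr0.trans_lt hr.1)
    ((hd r hr).differentiableAt (isOpen_Ioo.mem_nhds hr)).hasDerivAt

theorem monotoneOn_radialFlux (hN : 1 ≤ N) (hr0 : 0 ≤ r0)
    (h : RadialSystem N a b δ μ u v (Ioo r0 R)) (hv : ∀ r ∈ Ioo r0 R, 0 ≤ v r) :
    MonotoneOn (radialFlux N u) (Ioo r0 R) :=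
  monotoneOn_of_hasDerivAt_nonneg (convex_Ioo r0 R) (fun r hr => h.hasDerivAt_radialFlux hN hr0 hr)
    fun r hr => by
      rw [interior_Ioo] at hr
      have := hr0.trans_lt hr.1
      have := hv r hr
      positivity

theorem bddAbove_image_of_bddAbove_image (hN : 1 ≤ N) (hr0 : 0 ≤ r0)
    (h : RadialSystem N a b δ μ u v (Ioo r0 R)) (hδ : 0 ≤ δ) (hv : ∀ r ∈ Ioo r0 R, 0 ≤ v r)
    {s : ℝ} (hs : s ∈ Ioo r0 R) (hbdd : BddAbove (v '' Ioo s R)) : BddAbove (u '' Ioo s R) := by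
  obtain ⟨M, hM⟩ := hbdd
  have hs0 : 0 < s := hr0.trans_lt hs.1
  have hsub : Ico s R ⊆ Ioo r0 R := fun r hr => ⟨hs.1.trans_le hr.1, hr.2⟩
  obtain ⟨B, hB⟩ := exists_forall_pow_mul_rpow_le (R := R) hs0 (N - 1) a
  have hφ : BddAbove (radialFlux N u '' Ico s R) :=
    bddAbove_image_Ico_of_deriv_le (fun r hr => h.hasDerivAt_radialFlux hN hr0 (hsub hr))
      (C := max B 0 * max M 0 ^ δ) fun r hr => by
        have hvr := hv r (hsub (Ioo_subset_Ico_self hr))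
        rw [← mul_assoc]
        exact mul_le_mul ((hB r ⟨hr.1.le, hr.2.le⟩).trans (le_max_left B 0))
          (rpow_le_rpow hvr ((hM (mem_image_of_mem v hr)).trans (le_max_left M 0)) hδ)
          (rpow_nonneg hvr δ) (le_max_right B 0)
  exact (bddAbove_image_Ico_of_radialFlux hs0 (fun r hr => h.hasDerivAt (hsub hr)) hφ).mono
    (image_mono Ioo_subset_Ico_self)

theorem exists_forall_radialFlux_pos (hN : 1 ≤ N) (hr0 : 0 ≤ r0) (hr0R : r0 < R)
    (h : RadialSystem N a b δ μ u v (Ioo r0 R)) (hv : ∀ r ∈ Ioo r0 R, 0 ≤ v r)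
    (hunb : ∀ s ∈ Ioo r0 R, ¬ BddAbove (u '' Ioo s R)) :
    ∃ s ∈ Ioo r0 R, ∀ r ∈ Ico s R, 0 < radialFlux N u r := by
  obtain ⟨s, hs, hφs⟩ : ∃ s ∈ Ioo r0 R, 0 < radialFlux N u s := by
    by_contra! hneg
    obtain ⟨m, hm⟩ := nonempty_Ioo.2 hr0R
    have hsub : Ico m R ⊆ Ioo r0 R := fun r hr => ⟨hm.1.trans_le hr.1, hr.2⟩
    refine hunb m hm ((bddAbove_image_Ico_of_deriv_le (C := 0)
      (fun r hr => h.hasDerivAt (hsub hr)) fun r hr => ?_).mono (image_mono Ioo_subset_Ico_self))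
    have hr' := hsub (Ioo_subset_Ico_self hr)
    rw [deriv_eq_radialFlux_div (N := N) (hr0.trans_lt hr'.1)]
    exact div_nonpos_of_nonpos_of_nonneg (hneg r hr') (pow_nonneg (hr0.trans hr'.1.le) _)
  exact ⟨s, hs, fun r hr => hφs.trans_le
    (h.monotoneOn_radialFlux hN hr0 hv hs ⟨hs.1.trans_le hr.1, hr.2⟩ hr.1)⟩

theorem tendsto_atTop (hN : 1 ≤ N) (hr0 : 0 ≤ r0) (hr0R : r0 < R)
    (h : RadialSystem N a b δ μ u v (Ioo r0 R)) (hv : ∀ r ∈ Ioo r0 R, 0 ≤ v r)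
    (hunb : ∀ s ∈ Ioo r0 R, ¬ BddAbove (u '' Ioo s R)) : Tendsto u (𝓝[<] R) atTop := by
  obtain ⟨s, hs, hφ⟩ := h.exists_forall_radialFlux_pos hN hr0 hr0R hv hunb
  exact (monotoneOn_of_radialFlux_nonneg (hr0.trans_lt hs.1)
    (fun r hr => h.hasDerivAt ⟨hs.1.trans_le hr.1, hr.2⟩)
    fun r hr => (hφ r (Ioo_subset_Ico_self hr)).le).tendsto_nhdsLT_atTop (hunb s hs)

theorem tendsto_deriv_atTop (hN : 1 ≤ N) (hr0 : 0 ≤ r0) (hr0R : r0 < R)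
    (h : RadialSystem N a b δ μ u v (Ioo r0 R)) (hv : ∀ r ∈ Ioo r0 R, 0 ≤ v r)
    (hunb : ∀ s ∈ Ioo r0 R, ¬ BddAbove (u '' Ioo s R)) :
    Tendsto (deriv u) (𝓝[<] R) atTop := by
  obtain ⟨s, hs, hφ⟩ := h.exists_forall_radialFlux_pos hN hr0 hr0R hv hunb
  have hs0 : 0 < s := hr0.trans_lt hs.1
  have hsub : Ico s R ⊆ Ioo r0 R := fun r hr => ⟨hs.1.trans_le hr.1, hr.2⟩
  have hunbφ : ¬ BddAbove (radialFlux N u '' Ioo s R) := fun hbdd =>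
    hunb s hs ((bddAbove_image_Ico_of_radialFlux hs0 (fun r hr => h.hasDerivAt (hsub hr))
      (by rw [← Ioo_insert_left hs.2, image_insert_eq]; exact hbdd.insert _)).mono
      (image_mono Ioo_subset_Ico_self))
  have hlim := (((h.monotoneOn_radialFlux hN hr0 hv).mono hsub).tendsto_nhdsLT_atTop
    hunbφ).atTop_div_const (pow_pos (hs0.trans hs.2) (N - 1))
  refine tendsto_atTop_mono' _ ?_ hlim
  filter_upwards [Ioo_mem_nhdsLT hs.2] with r hr
  exact radialFlux_div_pow_le_deriv (hs0.trans hr.1) hr.2.le (hφ r (Ioo_subset_Ico_self hr)).le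

theorem eventually_le_mul_rpow (hN : 1 ≤ N) (hr0 : 0 ≤ r0) (hr0R : r0 < R)
    (h : RadialSystem N a b δ μ u v (Ioo r0 R)) (hδ : 0 ≤ δ) (hμ : 0 ≤ μ) (hμδ : 1 < μ * δ)
    (hu : ∀ r ∈ Ioo r0 R, 0 ≤ u r) (hv : ∀ r ∈ Ioo r0 R, 0 ≤ v r)
    (hunb_u : ∀ s ∈ Ioo r0 R, ¬ BddAbove (u '' Ioo s R))
    (hunb_v : ∀ s ∈ Ioo r0 R, ¬ BddAbove (v '' Ioo s R)) :
    ∃ C > 0, ∀ᶠ r in 𝓝[<] R, u r ≤ C * (R - r) ^ (-((2 * δ + 2) / (μ * δ - 1))) := by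
  obtain ⟨su, hsu, hφu⟩ := h.exists_forall_radialFlux_pos hN hr0 hr0R hv hunb_u
  obtain ⟨sv, hsv, hφv⟩ := h.swap.exists_forall_radialFlux_pos hN hr0 hr0R hu hunb_v
  obtain ⟨_, ⟨t, ht, rfl⟩, hut⟩ :=
    not_bddAbove_iff.1 (hunb_u (max su sv) ⟨lt_max_of_lt_left hsu.1, max_lt hsu.2 hsv.2⟩) 0
  have ht0 : 0 < t := hr0.trans_lt (hsu.1.trans_le ((le_max_left su sv).trans ht.1.le))
  have hsub : Ico t R ⊆ Ioo r0 R :=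
    fun r hr => ⟨hsu.1.trans_le ((le_max_left su sv).trans (ht.1.le.trans hr.1)), hr.2⟩
  have hsub_u : Ico t R ⊆ Ico su R := Ico_subset_Ico_left ((le_max_left su sv).trans ht.1.le)
  have hsub_v : Ico t R ⊆ Ico sv R := Ico_subset_Ico_left ((le_max_right su sv).trans ht.1.le)
  obtain ⟨ma, hma, hma_le⟩ := exists_pos_forall_le_pow_mul_rpow ht0 ht.2.le (N - 1) a
  obtain ⟨mb, hmb, hmb_le⟩ := exists_pos_forall_le_pow_mul_rpow ht0 ht.2.le (N - 1) b
  obtain ⟨c, hc, hgrowth⟩ := exists_growsSuperlinearly (N := N) ht0 ht.2 hma hmb hδ hμ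
    (fun r hr => h.hasDerivAt (hsub hr)) (fun r hr => h.swap.hasDerivAt (hsub hr))
    (fun r hr => h.hasDerivAt_radialFlux hN hr0 (hsub hr))
    (fun r hr => h.swap.hasDerivAt_radialFlux hN hr0 (hsub hr))
    (fun r hr => by
      rw [← mul_assoc]
      exact mul_le_mul_of_nonneg_right (hma_le r ⟨hr.1, hr.2.le⟩) (rpow_nonneg (hv r (hsub hr)) δ))
    (fun r hr => by
      rw [← mul_assoc]
      exact mul_le_mul_of_nonneg_right (hmb_le r ⟨hr.1, hr.2.le⟩) (rpow_nonneg (hu r (hsub hr)) μ))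
    (fun r hr => hu r (hsub hr)) (fun r hr => hv r (hsub hr))
    (fun r hr => (hφu r (hsub_u hr)).le) (fun r hr => (hφv r (hsub_v hr)).le)
  have hmono : MonotoneOn u (Ico t R) := hgrowth.monotoneOn hc.le fun r hr => hu r (hsub hr)
  obtain ⟨C, hC, hle⟩ := hgrowth.le_mul_rpow hc hμδ (by positivity)
    fun x hx => hut.trans_le (hmono ⟨le_rfl, ht.2⟩ hx hx.1)
  exact ⟨C, hC, by filter_upwards [Ioo_mem_nhdsLT ht.2] with r hr using hle r ⟨hr.1.le, hr.2⟩⟩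

end RadialSystem

theorem stmt6_general (N : ℕ) (hN : 1 ≤ N) (a b δ μ D γ ξ : ℝ)
    (hδ : 0 < δ) (hμ : 0 < μ)
    (hD : D = μ * δ - 1) (hDpos : 0 < D)
    (hγ : γ = 2 * (1 + δ) / D) (hξ : ξ = 2 * (1 + μ) / D)
    (r0 R : ℝ) (hr0 : 0 ≤ r0) (hr0R : r0 < R)
    (u v : ℝ → ℝ)
    (hsol : RadialSystem N a b δ μ u v (Ioo r0 R))
    (hnonneg : ∀ r ∈ Ioo r0 R, 0 ≤ u r ∧ 0 ≤ v r)
    (hunb : ∀ ρ ∈ Ioo r0 R, ¬ (BddAbove (u '' Ioo ρ R) ∧ BddAbove (v '' Ioo ρ R))) :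
    Tendsto u (nhdsWithin R (Iio R)) atTop ∧
    Tendsto v (nhdsWithin R (Iio R)) atTop ∧
    Tendsto (deriv u) (nhdsWithin R (Iio R)) atTop ∧
    Tendsto (deriv v) (nhdsWithin R (Iio R)) atTop ∧
    ∃ C > 0, ∃ ρ ∈ Ioo r0 R, ∀ r ∈ Ioo ρ R,
      u r ≤ C * (R - r) ^ (-γ) ∧ v r ≤ C * (R - r) ^ (-ξ) := by
  have hu0 : ∀ r ∈ Ioo r0 R, 0 ≤ u r := fun r hr => (hnonneg r hr).1
  have hv0 : ∀ r ∈ Ioo r0 R, 0 ≤ v r := fun r hr => (hnonneg r hr).2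
  have hunb_u : ∀ s ∈ Ioo r0 R, ¬ BddAbove (u '' Ioo s R) := fun s hs hbdd =>
    hunb s hs ⟨hbdd, hsol.swap.bddAbove_image_of_bddAbove_image hN hr0 hμ.le hu0 hs hbdd⟩
  have hunb_v : ∀ s ∈ Ioo r0 R, ¬ BddAbove (v '' Ioo s R) := fun s hs hbdd =>
    hunb s hs ⟨hsol.bddAbove_image_of_bddAbove_image hN hr0 hδ.le hv0 hs hbdd, hbdd⟩
  obtain ⟨Cu, hCu, hbu⟩ := hsol.eventually_le_mul_rpow hN hr0 hr0R hδ.le hμ.le (by linarith)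
    hu0 hv0 hunb_u hunb_v
  obtain ⟨Cv, hCv, hbv⟩ := hsol.swap.eventually_le_mul_rpow hN hr0 hr0R hμ.le hδ.le
    (by linarith [mul_comm μ δ]) hv0 hu0 hunb_v hunb_u
  rw [show (2 * δ + 2) / (μ * δ - 1) = γ by rw [hγ, hD]; ring] at hbu
  rw [show (2 * μ + 2) / (δ * μ - 1) = ξ by rw [hξ, hD, mul_comm δ]; ring] at hbv
  refine ⟨hsol.tendsto_atTop hN hr0 hr0R hv0 hunb_u, hsol.swap.tendsto_atTop hN hr0 hr0R hu0 hunb_v,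
    hsol.tendsto_deriv_atTop hN hr0 hr0R hv0 hunb_u,
    hsol.swap.tendsto_deriv_atTop hN hr0 hr0R hu0 hunb_v, max Cu Cv, lt_max_of_lt_left hCu,
    exists_mem_Ioo_forall_of_eventually_nhdsLT hr0R ?_⟩
  filter_upwards [hbu, hbv, self_mem_nhdsWithin] with r hur hvr (hr : r < R)
  have hRr : 0 ≤ R - r := sub_nonneg.2 hr.le
  exact ⟨hur.trans (by gcongr; exact le_max_left Cu Cv),
    hvr.trans (by gcongr; exact le_max_right Cu Cv)⟩

theorem stmt6 (N : ℕ) (hN : 1 ≤ N) (a b δ μ D γ ξ : ℝ)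
    (ha : max (-2 : ℝ) (-(N : ℝ)) < a) (hb : max (-2 : ℝ) (-(N : ℝ)) < b)
    (hδ : 0 < δ) (hμ : 0 < μ)
    (hD : D = μ * δ - 1) (hDpos : 0 < D)
    (hγ : γ = 2 * (1 + δ) / D) (hξ : ξ = 2 * (1 + μ) / D)
    (r0 R : ℝ) (hr0 : 0 ≤ r0) (hr0R : r0 < R)
    (u v : ℝ → ℝ)
    (hsol : RadialSystem N a b δ μ u v (Ioo r0 R))
    (hnonneg : ∀ r ∈ Ioo r0 R, 0 ≤ u r ∧ 0 ≤ v r)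
    (hunb : ∀ ρ ∈ Ioo r0 R, ¬ (BddAbove (u '' Ioo ρ R) ∧ BddAbove (v '' Ioo ρ R))) :
    Tendsto u (nhdsWithin R (Iio R)) atTop ∧
    Tendsto v (nhdsWithin R (Iio R)) atTop ∧
    Tendsto (deriv u) (nhdsWithin R (Iio R)) atTop ∧
    Tendsto (deriv v) (nhdsWithin R (Iio R)) atTop ∧
    ∃ C > 0, ∃ ρ ∈ Ioo r0 R, ∀ r ∈ Ioo ρ R,
      u r ≤ C * (R - r) ^ (-γ) ∧ v r ≤ C * (R - r) ^ (-ξ) :=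
  stmt6_general N hN a b δ μ D γ ξ hδ hμ hD hDpos hγ hξ r0 R hr0 hr0R u v hsol hnonneg hunb
end

section
/- Let (u, v) be a nonnegative solution of the radial system (S) on (r0, 1) with u, v, u', v' > 0 on (r0, 1). With the notations r(t), s = e^t, F, G, X, Y, Z, W of the context, the functions X, Y, Z, W are well defined on (−∞, t0) for suitable t0 and satisfy there: X_t = X(X + 1 + Z), Y_t = Y(Y + 1 + W), Z_t = Z(1 − δY − Z − α(t)), W_t = W(1 − μX − W − β(t)), where α(t) = (2N−2+a)e^t/(1+(N−2)e^t) and β(t) = (2N−2+b)e^t/(1+(N−2)e^t). Moreover u and v are recovered by u(r(t)) = s^{−γ}·F^{−1/D}·G^{−δ/D}·(|Z|X)^{1/D}·(|W|Y)^{δ/D} and v(r(t)) = s^{−ξ}·F^{−μ/D}·G^{−1/D}·(|W|Y)^{1/D}·(|Z|X)^{μ/D}. -/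
/-!
Since `r'(t) = -e^t r^(N-1)`, the factor `s r^(N-1)` in `X, Y, Z, W` is `-r'(t)`, so
`X = -(log u(r(t)))'` and `Y = -(log v(r(t)))'`. Differentiating once more and eliminating
`u''`, `v''` with the system gives the quadratic system, where `e^t r^(N-2) = e^t/(1+(N-2)e^t)`
produces `α` and `β`. For the second part, `|Z|X = s² F v^δ / u` and `|W|Y = s² G u^μ / v`,
a linear system in `log u, log v` whose determinant is `1 - μδ = -D`.
-/

open Real Set Filter

/-- `Ψ(s) = (1+(N-2)s)^(-1/(N-2))` if `N ≠ 2`, and `Ψ(s) = e^(-s)` if `N = 2`. -/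
noncomputable def PsiF (N : ℕ) (s : ℝ) : ℝ :=
  if N = 2 then Real.exp (-s) else (1 + ((N : ℝ) - 2) * s) ^ (-(1 / ((N : ℝ) - 2)))

/-- `r(t) = Ψ(e^t)`. -/
noncomputable def rF (N : ℕ) (t : ℝ) : ℝ := PsiF N (Real.exp t)

/-- `X(t) = s·r^(N-1)·u'(r)/u(r)` at `r = r(t)`, `s = e^t`. -/
noncomputable def XF (N : ℕ) (u : ℝ → ℝ) (t : ℝ) : ℝ :=
  Real.exp t * rF N t ^ ((N : ℝ) - 1) * deriv u (rF N t) / u (rF N t)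

/-- `Y(t) = s·r^(N-1)·v'(r)/v(r)` at `r = r(t)`, `s = e^t`. -/
noncomputable def YF (N : ℕ) (v : ℝ → ℝ) (t : ℝ) : ℝ :=
  Real.exp t * rF N t ^ ((N : ℝ) - 1) * deriv v (rF N t) / v (rF N t)

/-- `Z(t) = -s·r^(N-1+a)·v(r)^δ/u'(r)` at `r = r(t)`, `s = e^t`. -/
noncomputable def ZF (N : ℕ) (a δ : ℝ) (u v : ℝ → ℝ) (t : ℝ) : ℝ :=
  -(Real.exp t * rF N t ^ ((N : ℝ) - 1 + a) * v (rF N t) ^ δ / deriv u (rF N t))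

/-- `W(t) = -s·r^(N-1+b)·u(r)^μ/v'(r)` at `r = r(t)`, `s = e^t`. -/
noncomputable def WF (N : ℕ) (b μ : ℝ) (u v : ℝ → ℝ) (t : ℝ) : ℝ :=
  -(Real.exp t * rF N t ^ ((N : ℝ) - 1 + b) * u (rF N t) ^ μ / deriv v (rF N t))

section ChangeOfVariables

variable {ρ u v : ℝ → ℝ} {c a δ t : ℝ}

/-- `X` of the system for a general time change `ρ` with `ρ' = -e^t ρ^c`:
`XF N = radialX (rF N) (N - 1)`, `ZF N a δ = radialZ (rF N) (N - 1) a δ`, and `YF`, `WF` are the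
same with `u`, `v` swapped. -/
noncomputable def radialX (ρ : ℝ → ℝ) (c : ℝ) (u : ℝ → ℝ) (t : ℝ) : ℝ :=
  exp t * ρ t ^ c * deriv u (ρ t) / u (ρ t)

noncomputable def radialZ (ρ : ℝ → ℝ) (c a δ : ℝ) (u v : ℝ → ℝ) (t : ℝ) : ℝ :=
  -(exp t * ρ t ^ (c + a) * v (ρ t) ^ δ / deriv u (ρ t))

theorem hasDerivAt_exp_mul_rpow (hρ : HasDerivAt ρ (-(exp t * ρ t ^ c)) t) (hρ0 : 0 < ρ t)
    (e : ℝ) :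
    HasDerivAt (fun t ↦ exp t * ρ t ^ e)
      (exp t * ρ t ^ e * (1 - e * (exp t * ρ t ^ (c - 1)))) t := by
  refine ((hasDerivAt_exp t).fun_mul (hρ.rpow_const (p := e) (Or.inl hρ0.ne'))).congr_deriv ?_
  rw [rpow_sub_one hρ0.ne', rpow_sub_one hρ0.ne']
  field_simp
  ring

theorem hasDerivAt_radialX (hρ : HasDerivAt ρ (-(exp t * ρ t ^ c)) t) (hρ0 : 0 < ρ t)
    (hu : DifferentiableAt ℝ u (ρ t)) (hu' : DifferentiableAt ℝ (deriv u) (ρ t))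
    (hu0 : u (ρ t) ≠ 0) (hu'0 : deriv u (ρ t) ≠ 0)
    (hode : deriv (deriv u) (ρ t) + c / ρ t * deriv u (ρ t) = ρ t ^ a * v (ρ t) ^ δ) :
    HasDerivAt (radialX ρ c u)
      (radialX ρ c u t * (radialX ρ c u t + 1 + radialZ ρ c a δ u v t)) t := by
  refine (((hasDerivAt_exp_mul_rpow hρ hρ0 c).fun_mul (hu'.hasDerivAt.comp t hρ)).fun_div
    (hu.hasDerivAt.comp t hρ) hu0).congr_deriv ?_
  simp only [radialX, radialZ, Function.comp_apply]
  rw [eq_sub_of_add_eq hode, rpow_add hρ0, rpow_sub_one hρ0.ne']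
  field_simp
  ring

theorem hasDerivAt_radialZ (hρ : HasDerivAt ρ (-(exp t * ρ t ^ c)) t) (hρ0 : 0 < ρ t)
    (hv : DifferentiableAt ℝ v (ρ t)) (hu' : DifferentiableAt ℝ (deriv u) (ρ t))
    (hv0 : 0 < v (ρ t)) (hu'0 : deriv u (ρ t) ≠ 0)
    (hode : deriv (deriv u) (ρ t) + c / ρ t * deriv u (ρ t) = ρ t ^ a * v (ρ t) ^ δ) :
    HasDerivAt (radialZ ρ c a δ u v)
      (radialZ ρ c a δ u v t * (1 - δ * radialX ρ c v t - radialZ ρ c a δ u v t -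
        (2 * c + a) * (exp t * ρ t ^ (c - 1)))) t := by
  refine ((((hasDerivAt_exp_mul_rpow hρ hρ0 (c + a)).fun_mul
    ((hv.hasDerivAt.comp t hρ).rpow_const (p := δ) (Or.inl hv0.ne'))).fun_div
    (hu'.hasDerivAt.comp t hρ) hu'0).fun_neg).congr_deriv ?_
  simp only [radialX, radialZ, Function.comp_apply]
  rw [eq_sub_of_add_eq hode, rpow_add hρ0, rpow_sub_one hρ0.ne',
    rpow_sub_one hv0.ne']
  field_simp
  ring

theorem abs_radialZ_mul_radialX (hρ0 : 0 < ρ t) (hv0 : 0 ≤ v (ρ t))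
    (hu'0 : 0 < deriv u (ρ t)) :
    |radialZ ρ c a δ u v t| * radialX ρ c u t
      = exp t ^ 2 * ρ t ^ (2 * c + a) * v (ρ t) ^ δ / u (ρ t) := by
  rw [radialZ, abs_neg, abs_of_nonneg (by positivity), radialX,
    show 2 * c + a = (c + a) + c by ring, rpow_add hρ0 (c + a) c]
  field_simp

end ChangeOfVariables

/-- The exponents invert `(U, V) ↦ (s² F V^δ / U, s² G U^μ / V)`, whose exponent matrix in
`(U, V)` has determinant `1 - μδ = -D`. -/
theorem eq_recovery_product {s F G U V δ μ D : ℝ} (hs : 0 < s) (hF : 0 < F) (hG : 0 < G)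
    (hU : 0 < U) (hV : 0 < V) (hD : D = μ * δ - 1) (hD0 : D ≠ 0) :
    U = s ^ (-(2 * (1 + δ) / D)) * F ^ (-(1 / D)) * G ^ (-(δ / D)) *
      (s ^ 2 * F * V ^ δ / U) ^ (1 / D) * (s ^ 2 * G * U ^ μ / V) ^ (δ / D) := by
  refine log_injOn_pos (Set.mem_Ioi.2 hU) (Set.mem_Ioi.2 (by positivity)) ?_
  simp (disch := positivity) only [log_mul, log_div, log_rpow, log_pow]
  field_simp
  rw [hD]
  ring

section TimeVariable

variable {N : ℕ}

theorem rF_of_ne_two (hN : N ≠ 2) (t : ℝ) :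
    rF N t = (1 + ((N : ℝ) - 2) * exp t) ^ (-(1 / ((N : ℝ) - 2))) := by
  simp [rF, PsiF, hN]

theorem rF_one : rF 1 = fun t ↦ 1 - exp t := by
  ext t
  norm_num [rF_of_ne_two, sub_eq_add_neg]

theorem rF_two : rF 2 = fun t ↦ exp (-exp t) := by
  ext t
  simp [rF, PsiF]

theorem one_le_natCast_sub_two (hN : 3 ≤ N) : (1 : ℝ) ≤ (N : ℝ) - 2 := by
  have : (3 : ℝ) ≤ N := by exact_mod_cast hN
  linarith

theorem one_add_mul_exp_pos (hN : 3 ≤ N) (t : ℝ) : 0 < 1 + ((N : ℝ) - 2) * exp t := by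
  nlinarith [exp_pos t, one_le_natCast_sub_two hN]

theorem tendsto_rF_atBot (N : ℕ) : Tendsto (rF N) atBot (nhds 1) := by
  have hψ : ContinuousAt (PsiF N) 0 := by
    unfold PsiF
    split_ifs
    · fun_prop
    · exact (by fun_prop : ContinuousAt (fun s : ℝ ↦ 1 + ((N : ℝ) - 2) * s) 0).rpow_const
        (Or.inl (by simp))
  have hψ0 : PsiF N 0 = 1 := by simp [PsiF]
  exact hψ0 ▸ hψ.tendsto.comp tendsto_exp_atBot

theorem rF_lt_one (hN : 1 ≤ N) (t : ℝ) : rF N t < 1 := by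
  obtain rfl | rfl | hN3 : N = 1 ∨ N = 2 ∨ 3 ≤ N := by omega
  · simp [rF_one, exp_pos]
  · simp [rF_two, exp_pos]
  · rw [rF_of_ne_two (by omega)]
    have := one_le_natCast_sub_two hN3
    apply rpow_lt_one_of_one_lt_of_neg
    · nlinarith [exp_pos t]
    · simp only [neg_lt_zero]
      positivity

theorem rF_rpow_sub_two (hN : 1 ≤ N) (t : ℝ) :
    rF N t ^ ((N : ℝ) - 2) = (1 + ((N : ℝ) - 2) * exp t)⁻¹ := by
  obtain rfl | rfl | hN3 : N = 1 ∨ N = 2 ∨ 3 ≤ N := by omega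
  · norm_num [rF_one, rpow_neg_one, sub_eq_add_neg]
  · simp
  · rw [rF_of_ne_two (by omega), ← rpow_mul (one_add_mul_exp_pos hN3 t).le]
    have : (N : ℝ) - 2 ≠ 0 := by linarith [one_le_natCast_sub_two hN3]
    rw [show -(1 / ((N : ℝ) - 2)) * ((N : ℝ) - 2) = -1 by field_simp, rpow_neg_one]

theorem hasDerivAt_rF (hN : 1 ≤ N) (t : ℝ) :
    HasDerivAt (rF N) (-(exp t * rF N t ^ ((N : ℝ) - 1))) t := by
  obtain rfl | rfl | hN3 : N = 1 ∨ N = 2 ∨ 3 ≤ N := by omega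
  · rw [rF_one]
    simpa using (hasDerivAt_exp t).const_sub 1
  · rw [rF_two]
    refine (hasDerivAt_exp t).neg.exp.congr_deriv ?_
    norm_num
    ring
  · have hA := one_add_mul_exp_pos hN3 t
    have : (N : ℝ) - 2 ≠ 0 := by linarith [one_le_natCast_sub_two hN3]
    rw [funext (rF_of_ne_two (N := N) (by omega))]
    refine ((((hasDerivAt_exp t).const_mul ((N : ℝ) - 2)).const_add 1).rpow_const
      (p := -(1 / ((N : ℝ) - 2))) (Or.inl hA.ne')).congr_deriv ?_
    rw [← rpow_mul hA.le, show -(1 / ((N : ℝ) - 2)) * ((N : ℝ) - 1)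
      = -(1 / ((N : ℝ) - 2)) - 1 by field_simp; ring]
    field_simp

theorem add_mul_exp_mul_rF_rpow (hN : 1 ≤ N) (x t : ℝ) :
    (2 * ((N : ℝ) - 1) + x) * (exp t * rF N t ^ ((N : ℝ) - 1 - 1))
      = (2 * (N : ℝ) - 2 + x) * exp t / (1 + ((N : ℝ) - 2) * exp t) := by
  rw [show (N : ℝ) - 1 - 1 = (N : ℝ) - 2 by ring, rF_rpow_sub_two hN]
  ring

theorem abs_ZF_mul_XF {a δ t : ℝ} {u v : ℝ → ℝ} (hr : 0 < rF N t) (hv0 : 0 ≤ v (rF N t))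
    (hu'0 : 0 < deriv u (rF N t)) :
    |ZF N a δ u v t| * XF N u t
      = exp t ^ 2 * rF N t ^ (2 * (N : ℝ) - 2 + a) * v (rF N t) ^ δ / u (rF N t) := by
  rw [show 2 * (N : ℝ) - 2 + a = 2 * ((N : ℝ) - 1) + a by ring]
  exact abs_radialZ_mul_radialX hr hv0 hu'0

end TimeVariable

theorem ContDiffOn.differentiableAt_deriv {f : ℝ → ℝ} {s : Set ℝ} {x : ℝ}
    (hf : ContDiffOn ℝ 2 f s) (hs : IsOpen s) (hx : x ∈ s) : DifferentiableAt ℝ (deriv f) x :=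
  ((hf.deriv_of_isOpen hs (m := 1) (by norm_num)).differentiableOn one_ne_zero).differentiableAt
    (hs.mem_nhds hx)

theorem stmt7_general (N : ℕ) (hN : 1 ≤ N) (a b δ μ D γ ξ : ℝ)
    (hD : D = μ * δ - 1) (hDpos : 0 < D)
    (hγ : γ = 2 * (1 + δ) / D) (hξ : ξ = 2 * (1 + μ) / D)
    (r0 : ℝ) (hr0 : 0 ≤ r0) (hr01 : r0 < 1)
    (u v : ℝ → ℝ)
    (hsol : RadialSystem N a b δ μ u v (Ioo r0 1))
    (hpos : ∀ r ∈ Ioo r0 1, 0 < u r ∧ 0 < v r ∧ 0 < deriv u r ∧ 0 < deriv v r) :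
    ∃ t0 : ℝ, ∀ t < t0,
      rF N t ∈ Ioo r0 1 ∧
      deriv (XF N u) t = XF N u t * (XF N u t + 1 + ZF N a δ u v t) ∧
      deriv (YF N v) t = YF N v t * (YF N v t + 1 + WF N b μ u v t) ∧
      deriv (ZF N a δ u v) t
        = ZF N a δ u v t * (1 - δ * YF N v t - ZF N a δ u v t -
            (2 * (N : ℝ) - 2 + a) * Real.exp t / (1 + ((N : ℝ) - 2) * Real.exp t)) ∧
      deriv (WF N b μ u v) t
        = WF N b μ u v t * (1 - μ * XF N u t - WF N b μ u v t -
            (2 * (N : ℝ) - 2 + b) * Real.exp t / (1 + ((N : ℝ) - 2) * Real.exp t)) ∧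
      u (rF N t)
        = Real.exp t ^ (-γ) * (rF N t ^ (2 * (N : ℝ) - 2 + a)) ^ (-(1 / D)) *
            (rF N t ^ (2 * (N : ℝ) - 2 + b)) ^ (-(δ / D)) *
            (|ZF N a δ u v t| * XF N u t) ^ (1 / D) *
            (|WF N b μ u v t| * YF N v t) ^ (δ / D) ∧
      v (rF N t)
        = Real.exp t ^ (-ξ) * (rF N t ^ (2 * (N : ℝ) - 2 + a)) ^ (-(μ / D)) *
            (rF N t ^ (2 * (N : ℝ) - 2 + b)) ^ (-(1 / D)) *
            (|WF N b μ u v t| * YF N v t) ^ (1 / D) *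
            (|ZF N a δ u v t| * XF N u t) ^ (μ / D) := by
  obtain ⟨t0, ht0⟩ :=
    eventually_atBot.mp ((tendsto_rF_atBot N).eventually (eventually_gt_nhds hr01))
  refine ⟨t0, fun t ht ↦ ?_⟩
  have hr : rF N t ∈ Ioo r0 1 := ⟨ht0 t ht.le, rF_lt_one hN t⟩
  have hr0' : 0 < rF N t := hr0.trans_lt hr.1
  obtain ⟨hu, hv, hode⟩ := hsol
  obtain ⟨hu0, hv0, hu'0, hv'0⟩ := hpos _ hr
  obtain ⟨hodeu, hodev⟩ := hode _ hr
  have hρ := hasDerivAt_rF hN t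
  have hdu := (hu.contDiffAt (isOpen_Ioo.mem_nhds hr)).differentiableAt two_ne_zero
  have hdv := (hv.contDiffAt (isOpen_Ioo.mem_nhds hr)).differentiableAt two_ne_zero
  have hdu' := hu.differentiableAt_deriv isOpen_Ioo hr
  have hdv' := hv.differentiableAt_deriv isOpen_Ioo hr
  have hZX := abs_ZF_mul_XF (a := a) (δ := δ) hr0' hv0.le hu'0
  have hWY : |WF N b μ u v t| * YF N v t = _ := abs_ZF_mul_XF hr0' hu0.le hv'0
  refine ⟨hr, (hasDerivAt_radialX hρ hr0' hdu hdu' hu0.ne' hu'0.ne' hodeu).deriv,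
    (hasDerivAt_radialX hρ hr0' hdv hdv' hv0.ne' hv'0.ne' hodev).deriv, ?_, ?_, ?_, ?_⟩
  · rw [← add_mul_exp_mul_rF_rpow hN]
    exact (hasDerivAt_radialZ hρ hr0' hdv hdu' hv0 hu'0.ne' hodeu).deriv
  · rw [← add_mul_exp_mul_rF_rpow hN]
    exact (hasDerivAt_radialZ hρ hr0' hdu hdv' hu0 hv'0.ne' hodev).deriv
  · rw [hZX, hWY, hγ]
    exact eq_recovery_product (exp_pos t) (by positivity) (by positivity) hu0 hv0 hD hDpos.ne'
  · rw [hZX, hWY, hξ]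
    refine (eq_recovery_product (δ := μ) (μ := δ) (F := rF N t ^ (2 * (N : ℝ) - 2 + b))
      (G := rF N t ^ (2 * (N : ℝ) - 2 + a)) (exp_pos t) (by positivity) (by positivity) hv0 hu0
      (by rw [hD, mul_comm]) hDpos.ne').trans ?_
    ring

theorem stmt7 (N : ℕ) (hN : 1 ≤ N) (a b δ μ D γ ξ : ℝ)
    (ha : max (-2 : ℝ) (-(N : ℝ)) < a) (hb : max (-2 : ℝ) (-(N : ℝ)) < b)
    (hδ : 0 < δ) (hμ : 0 < μ)
    (hD : D = μ * δ - 1) (hDpos : 0 < D)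
    (hγ : γ = 2 * (1 + δ) / D) (hξ : ξ = 2 * (1 + μ) / D)
    (r0 : ℝ) (hr0 : 0 ≤ r0) (hr01 : r0 < 1)
    (u v : ℝ → ℝ)
    (hsol : RadialSystem N a b δ μ u v (Ioo r0 1))
    (hpos : ∀ r ∈ Ioo r0 1, 0 < u r ∧ 0 < v r ∧ 0 < deriv u r ∧ 0 < deriv v r) :
    ∃ t0 : ℝ, ∀ t < t0,
      rF N t ∈ Ioo r0 1 ∧
      deriv (XF N u) t = XF N u t * (XF N u t + 1 + ZF N a δ u v t) ∧
      deriv (YF N v) t = YF N v t * (YF N v t + 1 + WF N b μ u v t) ∧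
      deriv (ZF N a δ u v) t
        = ZF N a δ u v t * (1 - δ * YF N v t - ZF N a δ u v t -
            (2 * (N : ℝ) - 2 + a) * Real.exp t / (1 + ((N : ℝ) - 2) * Real.exp t)) ∧
      deriv (WF N b μ u v) t
        = WF N b μ u v t * (1 - μ * XF N u t - WF N b μ u v t -
            (2 * (N : ℝ) - 2 + b) * Real.exp t / (1 + ((N : ℝ) - 2) * Real.exp t)) ∧
      u (rF N t)
        = Real.exp t ^ (-γ) * (rF N t ^ (2 * (N : ℝ) - 2 + a)) ^ (-(1 / D)) *
            (rF N t ^ (2 * (N : ℝ) - 2 + b)) ^ (-(δ / D)) *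
            (|ZF N a δ u v t| * XF N u t) ^ (1 / D) *
            (|WF N b μ u v t| * YF N v t) ^ (δ / D) ∧
      v (rF N t)
        = Real.exp t ^ (-ξ) * (rF N t ^ (2 * (N : ℝ) - 2 + a)) ^ (-(μ / D)) *
            (rF N t ^ (2 * (N : ℝ) - 2 + b)) ^ (-(1 / D)) *
            (|WF N b μ u v t| * YF N v t) ^ (1 / D) *
            (|ZF N a δ u v t| * XF N u t) ^ (μ / D) :=
  stmt7_general N hN a b δ μ D γ ξ hD hDpos hγ hξ r0 hr0 hr01 u v hsol hpos
end

section
/- Let δ, μ > 0 with μδ > 1 and let k ≥ 1. Let (x, y) : [0, ∞) → ℝ² be continuously differentiable with x'(τ) = x(τ)·(2 − x(τ) − δ·y(τ)) and y'(τ) = (y(τ) − 1/(δ+1))·((μ+1)·x(τ) − (δ+1)·y(τ)) for all τ ≥ 0, and suppose that for all τ ≥ 0: 1/k² ≤ x(τ) ≤ k² and 1/(δ+1) + 1/(2(μ+1)k⁴) ≤ y(τ) ≤ k². Then lim_{τ→∞} x(τ) = 2(δ+1)/(μδ+2δ+1) and lim_{τ→∞} y(τ) = 2(μ+1)/(μδ+2δ+1).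 -/
/-!
Put `z = y - 1/(δ+1)` and let `(p, q)` be `m₀` in the coordinates `(x, z)`. The system becomes
the Lotka–Volterra system `x' = x (-(x - p) - δ (z - q))`, `z' = z ((μ+1) (x - p) - (δ+1) (z - q))`
with equilibrium `(p, q)`. With Volterra's function `V p v = v - p - p log (v / p)`, the Lyapunov
function `W = (μ+1) V p x + δ V q z` satisfies `W' = -(μ+1) (x - p)² - δ (δ+1) (z - q)²`.
While `x` and `z` stay in a compact subinterval of `(0, ∞)`, `V p v` is comparable to `(v - p)²`
from above and below, so `W' ≤ -r W` for some `r > 0`; Grönwall gives `W → 0`, hence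
`(x, z) → (p, q)`.
-/

open Real Set Filter Topology

noncomputable def volterraFn (p v : ℝ) : ℝ := v - p - p * log (v / p)

section Volterra

variable {p v : ℝ}

theorem sq_sqrt_sub_sqrt_le_volterraFn (hp : 0 < p) (hv : 0 < v) :
    (√v - √p) ^ 2 ≤ volterraFn p v := by
  have hlog : log (v / p) = 2 * log (√v / √p) := by
    rw [← sqrt_div' _ hp.le, log_sqrt (div_pos hv hp).le]; ring
  have hle : p * log (√v / √p) ≤ √p * √v - p := by
    calc p * log (√v / √p) ≤ p * (√v / √p - 1) :=
          mul_le_mul_of_nonneg_left (log_le_sub_one_of_pos (by positivity)) hp.le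
      _ = √p * √v - p := by field_simp; linear_combination -√v * sq_sqrt hp.le
  have hsq : (√v - √p) ^ 2 = v + p - 2 * (√p * √v) := by
    ring_nf; rw [sq_sqrt hv.le, sq_sqrt hp.le]
  rw [volterraFn, hsq, hlog]
  linarith

theorem volterraFn_nonneg (hp : 0 < p) (hv : 0 < v) : 0 ≤ volterraFn p v :=
  (sq_nonneg _).trans (sq_sqrt_sub_sqrt_le_volterraFn hp hv)

theorem sq_sub_le_volterraFn {M : ℝ} (hp : 0 < p) (hv : 0 < v) (hvM : v ≤ M) :
    (v - p) ^ 2 ≤ (√M + √p) ^ 2 * volterraFn p v := by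
  have hsq : (v - p) ^ 2 = (√v + √p) ^ 2 * (√v - √p) ^ 2 := by
    conv_lhs => rw [← sq_sqrt hv.le, ← sq_sqrt hp.le]
    ring
  rw [hsq]
  gcongr
  exact sq_sqrt_sub_sqrt_le_volterraFn hp hv

theorem volterraFn_le_sq_sub_div (hp : 0 < p) (hv : 0 < v) :
    volterraFn p v ≤ (v - p) ^ 2 / v := by
  have h := one_sub_inv_le_log_of_pos (div_pos hv hp)
  rw [inv_div] at h
  have : (v - p) ^ 2 / v = v - p - p * (1 - p / v) := by field_simp
  rw [volterraFn, this]
  gcongr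

theorem mul_volterraFn_le_sq_sub {m : ℝ} (hp : 0 < p) (hm : 0 < m) (hmv : m ≤ v) :
    m * volterraFn p v ≤ (v - p) ^ 2 := by
  calc m * volterraFn p v ≤ m * ((v - p) ^ 2 / v) := by
        gcongr; exact volterraFn_le_sq_sub_div hp (hm.trans_le hmv)
    _ = m / v * (v - p) ^ 2 := by ring
    _ ≤ 1 * (v - p) ^ 2 := by gcongr; exact div_le_one_of_le₀ hmv (by linarith)
    _ = (v - p) ^ 2 := one_mul _

theorem HasDerivWithinAt.volterraFn {f : ℝ → ℝ} {f' p t : ℝ} {s : Set ℝ}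
    (hf : HasDerivWithinAt f f' s t) (hp : p ≠ 0) (ht : f t ≠ 0) :
    HasDerivWithinAt (fun t => volterraFn p (f t)) ((f t - p) / f t * f') s t := by
  have := (hf.sub_const p).sub (((hf.div_const p).log (div_ne_zero ht hp)).const_mul p)
  exact this.congr_deriv (by field_simp)

end Volterra

theorem tendsto_of_sq_sub_le {α : Type*} {l : Filter α} {f g : α → ℝ} {a : ℝ}
    (hg : Tendsto g l (𝓝 0)) (hfg : ∀ᶠ t in l, (f t - a) ^ 2 ≤ g t) : Tendsto f l (𝓝 a) := by
  rw [tendsto_iff_norm_sub_tendsto_zero]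
  refine squeeze_zero' (.of_forall fun _ => norm_nonneg _) ?_ (by simpa using hg.sqrt)
  filter_upwards [hfg] with t ht
  rw [norm_eq_abs, ← sqrt_sq_eq_abs]
  exact sqrt_le_sqrt ht

theorem tendsto_of_mul_volterraFn_le {α : Type*} {l : Filter α} {f g : α → ℝ} {c p M : ℝ}
    (hc : 0 < c) (hp : 0 < p) (hf : ∀ᶠ t in l, 0 < f t ∧ f t ≤ M)
    (hfg : ∀ᶠ t in l, c * volterraFn p (f t) ≤ g t) (hg : Tendsto g l (𝓝 0)) :
    Tendsto f l (𝓝 p) := by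
  refine tendsto_of_sq_sub_le (by simpa using hg.const_mul ((√M + √p) ^ 2 / c)) ?_
  filter_upwards [hf, hfg] with t ⟨hpos, hle⟩ hV
  calc (f t - p) ^ 2 ≤ (√M + √p) ^ 2 * volterraFn p (f t) := sq_sub_le_volterraFn hp hpos hle
    _ = (√M + √p) ^ 2 / c * (c * volterraFn p (f t)) := by field_simp
    _ ≤ (√M + √p) ^ 2 / c * g t := by gcongr

theorem le_mul_exp_of_hasDerivWithinAt_le {W W' : ℝ → ℝ} {r t : ℝ}
    (hW : ∀ s ∈ Ici (0 : ℝ), HasDerivWithinAt W (W' s) (Ici 0) s)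
    (hbound : ∀ s ∈ Ici (0 : ℝ), W' s ≤ -r * W s) (ht : 0 ≤ t) :
    W t ≤ W 0 * exp (-r * t) := by
  have := le_gronwallBound_of_liminf_deriv_right_le (K := -r) (ε := 0)
    (fun s hs => (hW s hs.1).continuousWithinAt.mono Icc_subset_Ici_self)
    (fun s hs _ hr => ((hW s hs.1).mono (Ici_subset_Ici.2 hs.1)).liminf_right_slope_le hr)
    le_rfl
    (fun s hs => (hbound s hs.1).trans_eq (add_zero _).symm) t ⟨ht, le_rfl⟩
  simpa [gronwallBound_ε0] using this

section LotkaVolterra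

variable {a b c d p q m M : ℝ} {x z : ℝ → ℝ}

theorem hasDerivWithinAt_lotkaVolterra_lyapunov {s : Set ℝ} {t : ℝ}
    (hx : HasDerivWithinAt x (x t * (-a * (x t - p) - b * (z t - q))) s t)
    (hz : HasDerivWithinAt z (z t * (c * (x t - p) - d * (z t - q))) s t)
    (hp : p ≠ 0) (hq : q ≠ 0) (hxt : x t ≠ 0) (hzt : z t ≠ 0) :
    HasDerivWithinAt (fun t => c * volterraFn p (x t) + b * volterraFn q (z t))
      (-(a * c * (x t - p) ^ 2 + b * d * (z t - q) ^ 2)) s t := by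
  refine (((hx.volterraFn hp hxt).const_mul c).add
    ((hz.volterraFn hq hzt).const_mul b)).congr_deriv ?_
  field_simp
  ring

theorem lotkaVolterra_lyapunov_decay {u v : ℝ} (ha : 0 ≤ a) (hb : 0 ≤ b) (hc : 0 ≤ c)
    (hd : 0 ≤ d) (hp : 0 < p) (hq : 0 < q) (hm : 0 < m) (hu : m ≤ u) (hv : m ≤ v) :
    m * min a d * (c * volterraFn p u + b * volterraFn q v) ≤
      a * c * (u - p) ^ 2 + b * d * (v - q) ^ 2 := by
  calc m * min a d * (c * volterraFn p u + b * volterraFn q v)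
        = min a d * c * (m * volterraFn p u) + min a d * b * (m * volterraFn q v) := by ring
    _ ≤ min a d * c * (u - p) ^ 2 + min a d * b * (v - q) ^ 2 := by
        gcongr
        exacts [mul_volterraFn_le_sq_sub hp hm hu, mul_volterraFn_le_sq_sub hq hm hv]
    _ ≤ a * c * (u - p) ^ 2 + d * b * (v - q) ^ 2 := by
        gcongr
        exacts [min_le_left a d, min_le_right a d]
    _ = a * c * (u - p) ^ 2 + b * d * (v - q) ^ 2 := by ring

theorem tendsto_lotkaVolterra_lyapunov_zero (ha : 0 < a) (hb : 0 ≤ b) (hc : 0 ≤ c)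
    (hd : 0 < d) (hp : 0 < p) (hq : 0 < q) (hm : 0 < m)
    (hx : ∀ t ∈ Ici (0 : ℝ),
      HasDerivWithinAt x (x t * (-a * (x t - p) - b * (z t - q))) (Ici 0) t)
    (hz : ∀ t ∈ Ici (0 : ℝ),
      HasDerivWithinAt z (z t * (c * (x t - p) - d * (z t - q))) (Ici 0) t)
    (hxm : ∀ t ∈ Ici (0 : ℝ), m ≤ x t) (hzm : ∀ t ∈ Ici (0 : ℝ), m ≤ z t) :
    Tendsto (fun t => c * volterraFn p (x t) + b * volterraFn q (z t)) atTop (𝓝 0) := by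
  set W := fun t => c * volterraFn p (x t) + b * volterraFn q (z t)
  set r := m * min a d
  have hr : 0 < r := mul_pos hm (lt_min ha hd)
  have hW : ∀ t ∈ Ici (0 : ℝ), HasDerivWithinAt W
      (-(a * c * (x t - p) ^ 2 + b * d * (z t - q) ^ 2)) (Ici 0) t := fun t ht =>
    hasDerivWithinAt_lotkaVolterra_lyapunov (hx t ht) (hz t ht) hp.ne' hq.ne'
      (hm.trans_le (hxm t ht)).ne' (hm.trans_le (hzm t ht)).ne'
  have hdecay : ∀ t ∈ Ici (0 : ℝ), W t ≤ W 0 * exp (-r * t) := fun t ht =>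
    le_mul_exp_of_hasDerivWithinAt_le hW (fun s hs => by
      simpa [neg_mul, neg_le_neg_iff] using lotkaVolterra_lyapunov_decay ha.le hb hc hd.le hp hq hm
        (hxm s hs) (hzm s hs)) ht
  have hexp : Tendsto (fun t => W 0 * exp (-r * t)) atTop (𝓝 0) := by
    simpa [neg_mul] using (tendsto_exp_neg_atTop_nhds_zero.comp
      (tendsto_id.const_mul_atTop hr)).const_mul (W 0)
  refine squeeze_zero' ((eventually_ge_atTop 0).mono fun t ht => ?_)
    ((eventually_ge_atTop 0).mono hdecay) hexp
  have := volterraFn_nonneg hp (hm.trans_le (hxm t ht))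
  have := volterraFn_nonneg hq (hm.trans_le (hzm t ht))
  positivity

theorem tendsto_of_lotkaVolterra (ha : 0 < a) (hb : 0 < b) (hc : 0 < c)
    (hd : 0 < d) (hp : 0 < p) (hq : 0 < q) (hm : 0 < m)
    (hx : ∀ t ∈ Ici (0 : ℝ),
      HasDerivWithinAt x (x t * (-a * (x t - p) - b * (z t - q))) (Ici 0) t)
    (hz : ∀ t ∈ Ici (0 : ℝ),
      HasDerivWithinAt z (z t * (c * (x t - p) - d * (z t - q))) (Ici 0) t)
    (hxb : ∀ t ∈ Ici (0 : ℝ), m ≤ x t ∧ x t ≤ M)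
    (hzb : ∀ t ∈ Ici (0 : ℝ), m ≤ z t ∧ z t ≤ M) :
    Tendsto x atTop (𝓝 p) ∧ Tendsto z atTop (𝓝 q) := by
  have hW := tendsto_lotkaVolterra_lyapunov_zero ha hb.le hc.le hd hp hq hm hx hz
    (fun t ht => (hxb t ht).1) (fun t ht => (hzb t ht).1)
  have hev : ∀ᶠ t in atTop, t ∈ Ici (0 : ℝ) := eventually_ge_atTop 0
  constructor
  · refine tendsto_of_mul_volterraFn_le hc hp
      (hev.mono fun t ht => ⟨hm.trans_le (hxb t ht).1, (hxb t ht).2⟩)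
      (hev.mono fun t ht => le_add_of_nonneg_right ?_) hW
    exact mul_nonneg hb.le (volterraFn_nonneg hq (hm.trans_le (hzb t ht).1))
  · refine tendsto_of_mul_volterraFn_le hb hq
      (hev.mono fun t ht => ⟨hm.trans_le (hzb t ht).1, (hzb t ht).2⟩)
      (hev.mono fun t ht => le_add_of_nonneg_left ?_) hW
    exact mul_nonneg hc.le (volterraFn_nonneg hp (hm.trans_le (hxb t ht).1))

end LotkaVolterra

theorem stmt10_general (δ μ k : ℝ) (hδ : 0 < δ) (hμ : 0 < μ) (hk : 1 ≤ k)
    (x y : ℝ → ℝ)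
    (hx : ∀ τ ∈ Ici (0 : ℝ),
      HasDerivWithinAt x (x τ * (2 - x τ - δ * y τ)) (Ici 0) τ)
    (hy : ∀ τ ∈ Ici (0 : ℝ),
      HasDerivWithinAt y ((y τ - 1 / (δ + 1)) * ((μ + 1) * x τ - (δ + 1) * y τ)) (Ici 0) τ)
    (hxb : ∀ τ ∈ Ici (0 : ℝ), 1 / k ^ 2 ≤ x τ ∧ x τ ≤ k ^ 2)
    (hyb : ∀ τ ∈ Ici (0 : ℝ),
      1 / (δ + 1) + 1 / (2 * (μ + 1) * k ^ 4) ≤ y τ ∧ y τ ≤ k ^ 2) :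
    Tendsto x atTop (nhds (2 * (δ + 1) / (μ * δ + 2 * δ + 1))) ∧
    Tendsto y atTop (nhds (2 * (μ + 1) / (μ * δ + 2 * δ + 1))) := by
  have hk0 : 0 < k := one_pos.trans_le hk
  have hden : 0 < μ * δ + 2 * δ + 1 := by positivity
  have hq : 0 < 2 * (μ + 1) / (μ * δ + 2 * δ + 1) - 1 / (δ + 1) := by
    rw [sub_pos, div_lt_div_iff₀ (by positivity) hden]
    nlinarith [mul_pos hμ hδ]
  obtain ⟨hxlim, hzlim⟩ :=
    tendsto_of_lotkaVolterra (a := 1) (b := δ) (c := μ + 1) (d := δ + 1)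
    (p := 2 * (δ + 1) / (μ * δ + 2 * δ + 1))
    (q := 2 * (μ + 1) / (μ * δ + 2 * δ + 1) - 1 / (δ + 1))
    (m := min (1 / k ^ 2) (1 / (2 * (μ + 1) * k ^ 4))) (M := k ^ 2)
    (z := fun t => y t - 1 / (δ + 1)) one_pos hδ (by linarith) (by linarith) (by positivity) hq
    (by positivity)
    (fun t ht => (hx t ht).congr_deriv (by field_simp; ring))
    (fun t ht => ((hy t ht).sub_const _).congr_deriv (by field_simp; ring))
    (fun t ht => ⟨(min_le_left _ _).trans (hxb t ht).1, (hxb t ht).2⟩)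
    (fun t ht => ⟨(min_le_right _ _).trans (by linarith [(hyb t ht).1]),
      by linarith [(hyb t ht).2, one_div_pos.2 (by linarith : 0 < δ + 1)]⟩)
  exact ⟨hxlim, by simpa using hzlim.add_const (1 / (δ + 1))⟩

theorem stmt10 (δ μ k : ℝ) (hδ : 0 < δ) (hμ : 0 < μ) (hD : 1 < μ * δ) (hk : 1 ≤ k)
    (x y : ℝ → ℝ)
    (hx : ∀ τ ∈ Ici (0 : ℝ),
      HasDerivWithinAt x (x τ * (2 - x τ - δ * y τ)) (Ici 0) τ)
    (hy : ∀ τ ∈ Ici (0 : ℝ),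
      HasDerivWithinAt y ((y τ - 1 / (δ + 1)) * ((μ + 1) * x τ - (δ + 1) * y τ)) (Ici 0) τ)
    (hxb : ∀ τ ∈ Ici (0 : ℝ), 1 / k ^ 2 ≤ x τ ∧ x τ ≤ k ^ 2)
    (hyb : ∀ τ ∈ Ici (0 : ℝ),
      1 / (δ + 1) + 1 / (2 * (μ + 1) * k ^ 4) ≤ y τ ∧ y τ ≤ k ^ 2) :
    Tendsto x atTop (nhds (2 * (δ + 1) / (μ * δ + 2 * δ + 1))) ∧
    Tendsto y atTop (nhds (2 * (μ + 1) / (μ * δ + 2 * δ + 1))) :=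
  stmt10_general δ μ k hδ hμ hk x y hx hy hxb hyb
end

section
/- Let δ, μ > 0. The system (T0) has no nonconstant periodic solution with values in (0, ∞) × (1/(δ+1), ∞): there is no nonconstant continuously differentiable periodic map (x, y) : ℝ → ℝ² satisfying x'(τ) = x(τ)·(2 − x(τ) − δ·y(τ)) and y'(τ) = (y(τ) − 1/(δ+1))·((μ+1)·x(τ) − (δ+1)·y(τ)) for all τ, with x(τ) > 0 and y(τ) > 1/(δ+1) for all τ. -/
/-! The Volterra-type function
`V = (μ+1)(x - x₀ log x) + δ((y - c) - (y₀ - c) log (y - c))`, with `c = 1/(δ+1)` and `(x₀, y₀)`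
the interior equilibrium, decreases along solutions of (T0):
`V' = -((μ+1)(x - x₀)² + δ(δ+1)(y - y₀)²)`, the cross terms cancelling thanks to the weights
`μ+1` and `δ`. Along a periodic solution `V` is periodic and antitone, hence constant, so `V' ≡ 0` and the solution sits at the equilibrium. -/

open Real

theorem Function.Periodic.eq_of_antitone {α β : Type*} [AddCommGroup α] [LinearOrder α]
    [IsOrderedAddMonoid α] [Archimedean α] [PartialOrder β] {f : α → β} {T : α}
    (hf : Function.Periodic f T) (hT : 0 < T) (hanti : Antitone f) (s t : α) : f s = f t := by
  wlog hst : s ≤ t generalizing s t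
  · exact (this t s (le_of_not_ge hst)).symm
  obtain ⟨n, hn⟩ := Archimedean.arch (t - s) hT
  refine le_antisymm ?_ (hanti hst)
  calc f s = f (s + n • T) := ((hf.nsmul n) s).symm
    _ ≤ f t := hanti (sub_le_iff_le_add'.mp hn)

theorem Function.Periodic.hasDerivAt_eq_zero_of_nonpos {V g : ℝ → ℝ} {T : ℝ}
    (hV : Function.Periodic V T) (hT : 0 < T) (hd : ∀ t, HasDerivAt V (g t) t)
    (hg : ∀ t, g t ≤ 0) (t : ℝ) : g t = 0 := by
  have hconst : V = fun _ => V 0 :=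
    funext fun s => hV.eq_of_antitone hT (antitone_of_hasDerivAt_nonpos hd hg) s 0
  exact (hd t).unique (by rw [hconst]; exact hasDerivAt_const t (V 0))

theorem hasDerivAt_sub_const_mul_log {u : ℝ → ℝ} {h a t : ℝ} (hu : HasDerivAt u (u t * h) t)
    (hut : u t ≠ 0) : HasDerivAt (fun s => u s - a * log (u s)) ((u t - a) * h) t := by
  have hlog : HasDerivAt (fun s => log (u s)) h t := by
    simpa [hut] using hu.log hut
  exact (hu.sub (hlog.const_mul a)).congr_deriv (by ring)

noncomputable def t0Lyapunov (δ μ x₀ y₀ x y : ℝ) : ℝ :=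
  let c := 1 / (δ + 1)
  (μ + 1) * (x - x₀ * log x) + δ * ((y - c) - (y₀ - c) * log (y - c))

theorem hasDerivAt_t0Lyapunov {δ μ x₀ y₀ t : ℝ} {x y : ℝ → ℝ}
    (h₀ : x₀ + δ * y₀ = 2) (h₁ : (μ + 1) * x₀ = (δ + 1) * y₀)
    (hx : HasDerivAt x (x t * (2 - x t - δ * y t)) t)
    (hy : HasDerivAt y ((y t - 1 / (δ + 1)) * ((μ + 1) * x t - (δ + 1) * y t)) t)
    (hxt : 0 < x t) (hyt : 1 / (δ + 1) < y t) :
    HasDerivAt (fun s => t0Lyapunov δ μ x₀ y₀ (x s) (y s))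
      (-((μ + 1) * (x t - x₀) ^ 2 + δ * (δ + 1) * (y t - y₀) ^ 2)) t := by
  have hX := (hasDerivAt_sub_const_mul_log (a := x₀) hx hxt.ne').const_mul (μ + 1)
  have hY := (hasDerivAt_sub_const_mul_log (a := y₀ - 1 / (δ + 1)) (hy.sub_const (1 / (δ + 1)))
    (sub_pos.2 hyt).ne').const_mul δ
  refine (hX.add hY).congr_deriv ?_
  linear_combination δ * (y t - y₀) * h₁ - (μ + 1) * (x t - x₀) * h₀

theorem stmt11 (δ μ : ℝ) (hδ : 0 < δ) (hμ : 0 < μ) :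
    ¬ ∃ (x y : ℝ → ℝ) (T : ℝ), 0 < T ∧
      (∀ τ : ℝ, HasDerivAt x (x τ * (2 - x τ - δ * y τ)) τ) ∧
      (∀ τ : ℝ, HasDerivAt y ((y τ - 1 / (δ + 1)) * ((μ + 1) * x τ - (δ + 1) * y τ)) τ) ∧
      (∀ τ : ℝ, 0 < x τ ∧ 1 / (δ + 1) < y τ) ∧
      (∀ τ : ℝ, x (τ + T) = x τ ∧ y (τ + T) = y τ) ∧
      ¬ (∀ τ : ℝ, x τ = x 0 ∧ y τ = y 0) := by
  rintro ⟨x, y, T, hT, hx, hy, hpos, hper, hne⟩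
  obtain ⟨x₀, y₀, h₀, h₁⟩ : ∃ x₀ y₀ : ℝ, x₀ + δ * y₀ = 2 ∧ (μ + 1) * x₀ = (δ + 1) * y₀ := by
    have hD : 2 * δ + 1 + δ * μ ≠ 0 := by positivity
    exact ⟨2 * (δ + 1) / (2 * δ + 1 + δ * μ), 2 * (μ + 1) / (2 * δ + 1 + δ * μ),
      by field_simp; ring, by field_simp⟩
  have hV := fun t => hasDerivAt_t0Lyapunov h₀ h₁ (hx t) (hy t) (hpos t).1 (hpos t).2
  have hVper : Function.Periodic (fun s => t0Lyapunov δ μ x₀ y₀ (x s) (y s)) T :=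
    fun t => by simp only [(hper t).1, (hper t).2]
  have hzero := hVper.hasDerivAt_eq_zero_of_nonpos hT hV fun t => by
    simp only [neg_nonpos]; positivity
  have hsq {a b c : ℝ} (hc : 0 < c) (h : c * (a - b) ^ 2 = 0) : a = b :=
    sub_eq_zero.mp (pow_eq_zero_iff two_ne_zero |>.mp ((mul_eq_zero.mp h).resolve_left hc.ne'))
  have hequil : ∀ t, x t = x₀ ∧ y t = y₀ := fun t => by
    obtain ⟨hxt, hyt⟩ := (add_eq_zero_iff_of_nonneg (by positivity) (by positivity)).mp
      (neg_eq_zero.mp (hzero t))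
    exact ⟨hsq (by positivity) hxt, hsq (by positivity) hyt⟩
  exact hne fun t => ⟨(hequil t).1.trans (hequil 0).1.symm, (hequil t).2.trans (hequil 0).2.symm⟩
end

section
/- Assume N ≥ 1 and either min{γ_{a,b}, ξ_{a,b}} > N−2 or N ≤ 2. Set X₀ = γ_{a,b}, Y₀ = ξ_{a,b}, Z₀ = N−2−γ_{a,b}, W₀ = N−2−ξ_{a,b}, and consider the polynomial f(λ) = (λ−X₀)(λ+Z₀)(λ−Y₀)(λ+W₀) − δμ·X₀Y₀Z₀W₀ over ℂ. Then f has a real root λ₃ < 0 and a real root λ₄ > max{X₀, Y₀, |Z₀|, |W₀|}, and the remaining two roots of f (counted with multiplicity) have strictly positive real part; in particular exactly one root of f has negative real part. -/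
/-!
With `x₁ = X₀`, `x₂ = -Z₀`, `x₃ = Y₀`, `x₄ = -W₀` all positive, `f(λ) = ∏ (λ - xᵢ) - K` with
`K = δμ X₀Y₀Z₀W₀ > x₁x₂x₃x₄`, so `f(0) < 0` and the intermediate value theorem gives a root
`u < 0` and a root `v > max xᵢ`. A root `c` with `Re c ≤ 0` and `Im c ≠ 0` is impossible: both
`(c - x₁)(c - x₂)` and `(c - x₃)(c - x₄)` have imaginary part of sign `-sign (Im c)`, and such a
product is never a positive real. On `(-∞, 0]` the product `∏ (t - xᵢ)` is strictly decreasing, so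
`u` is the only root in the closed left half-plane, and it is simple since `f'(u) < 0`. Hence the
two remaining roots lie in the open right half-plane.
-/

open Set Polynomial

section RealRoots

variable {x₁ x₂ x₃ x₄ K : ℝ}

lemma lt_mul_mul_mul_of_add_one_le {a b c d : ℝ} (hK : 0 ≤ K) (ha : K + 1 ≤ a)
    (hb : K + 1 ≤ b) (hc : K + 1 ≤ c) (hd : K + 1 ≤ d) : K < a * b * c * d :=
  calc K < K + 1 := lt_add_one K
    _ ≤ (K + 1) ^ 4 := le_self_pow₀ (by linarith) (by norm_num)
    _ = (K + 1) * (K + 1) * (K + 1) * (K + 1) := by ring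
    _ ≤ a * b * c * d := by
      gcongr ?_ * ?_ * ?_ * ?_ <;> first | linarith | (apply_rules [mul_nonneg] <;> linarith)

lemma strictAntiOn_prod_sub (h₁ : 0 ≤ x₁) (h₂ : 0 ≤ x₂) (h₃ : 0 ≤ x₃) (h₄ : 0 ≤ x₄) :
    StrictAntiOn (fun t : ℝ ↦ (t - x₁) * (t - x₂) * (t - x₃) * (t - x₄)) (Iic 0) := by
  intro s _ t (ht : t ≤ 0) hst
  calc (t - x₁) * (t - x₂) * (t - x₃) * (t - x₄)
      = (x₁ - t) * (x₂ - t) * (x₃ - t) * (x₄ - t) := by ring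
    _ < (x₁ - s) * (x₂ - s) * (x₃ - s) * (x₄ - s) := by
      gcongr ?_ * ?_ * ?_ * ?_ <;> first | linarith | (apply_rules [mul_nonneg] <;> linarith)
    _ = (s - x₁) * (s - x₂) * (s - x₃) * (s - x₄) := by ring

lemma exists_neg_prod_sub_eq (h₁ : 0 ≤ x₁) (h₂ : 0 ≤ x₂) (h₃ : 0 ≤ x₃) (h₄ : 0 ≤ x₄)
    (hK : x₁ * x₂ * x₃ * x₄ < K) :
    ∃ u < 0, (u - x₁) * (u - x₂) * (u - x₃) * (u - x₄) = K := by
  have hK₀ : 0 ≤ K := by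
    have : 0 ≤ x₁ * x₂ * x₃ * x₄ := by apply_rules [mul_nonneg]
    linarith
  have h_zero : (0 - x₁) * (0 - x₂) * (0 - x₃) * (0 - x₄) < K := by linarith
  have h_far : K < (-(K + 1) - x₁) * (-(K + 1) - x₂) * (-(K + 1) - x₃) * (-(K + 1) - x₄) := by
    convert lt_mul_mul_mul_of_add_one_le hK₀ (a := x₁ + (K + 1)) (b := x₂ + (K + 1))
      (c := x₃ + (K + 1)) (d := x₄ + (K + 1)) (by linarith) (by linarith) (by linarith)
      (by linarith) using 1
    ring
  obtain ⟨u, ⟨-, hu⟩, hu_eq⟩ := intermediate_value_Ioo' (by linarith : -(K + 1) ≤ 0)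
    (f := fun t ↦ (t - x₁) * (t - x₂) * (t - x₃) * (t - x₄)) (by fun_prop) ⟨h_zero, h_far⟩
  exact ⟨u, hu, hu_eq⟩

lemma exists_gt_prod_sub_eq (hK : 0 < K) :
    ∃ v, x₁ < v ∧ x₂ < v ∧ x₃ < v ∧ x₄ < v ∧ (v - x₁) * (v - x₂) * (v - x₃) * (v - x₄) = K := by
  set m := max (max x₁ x₂) (max x₃ x₄) with hm
  have h_le : x₁ ≤ m ∧ x₂ ≤ m ∧ x₃ ≤ m ∧ x₄ ≤ m := by simp [m]
  have h_max : (m - x₁) * (m - x₂) * (m - x₃) * (m - x₄) < K := by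
    have : (m - x₁) * (m - x₂) * (m - x₃) * (m - x₄) = 0 := by
      rcases max_choice (max x₁ x₂) (max x₃ x₄) with h | h <;> rw [hm, h]
      · rcases max_choice x₁ x₂ with h' | h' <;> rw [h'] <;> ring
      · rcases max_choice x₃ x₄ with h' | h' <;> rw [h'] <;> ring
    linarith
  have h_far : K < (m + (K + 1) - x₁) * (m + (K + 1) - x₂) * (m + (K + 1) - x₃) *
      (m + (K + 1) - x₄) := by
    apply lt_mul_mul_mul_of_add_one_le hK.le <;> linarith
  obtain ⟨v, ⟨hv, -⟩, hv_eq⟩ := intermediate_value_Ioo (by linarith : m ≤ m + (K + 1))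
    (f := fun t ↦ (t - x₁) * (t - x₂) * (t - x₃) * (t - x₄)) (by fun_prop) ⟨h_max, h_far⟩
  exact ⟨v, by linarith, by linarith, by linarith, by linarith, hv_eq⟩

end RealRoots

namespace Complex

lemma mul_ne_ofReal_of_im_mul_pos {w₁ w₂ : ℂ} {k : ℝ} (hw : 0 < w₁.im * w₂.im) (hk : 0 < k) :
    w₁ * w₂ ≠ k := by
  intro h
  have h_im : w₁.re * w₂.im + w₁.im * w₂.re = 0 := by simpa using congrArg im h
  have h_re : w₁.re * w₂.re - w₁.im * w₂.im = k := by simpa using congrArg re h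
  have : k * (w₁.im * w₂.im) = -(w₁.im * w₂.re) ^ 2 - (w₁.im * w₂.im) ^ 2 := by
    linear_combination (-(w₁.im * w₂.im)) * h_re + (w₁.im * w₂.re) * h_im
  linarith [sq_nonneg (w₁.im * w₂.re), sq_nonneg (w₁.im * w₂.im), mul_pos hk hw]

lemma im_sub_ofReal_mul_sub_ofReal (c : ℂ) (x y : ℝ) :
    ((c - x) * (c - y)).im = c.im * (2 * c.re - x - y) := by
  simp only [mul_im, sub_re, sub_im, ofReal_re, ofReal_im]
  ring

variable {x₁ x₂ x₃ x₄ K : ℝ}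

lemma prod_sub_ofReal_ne_ofReal (h₁ : 0 < x₁) (h₂ : 0 < x₂) (h₃ : 0 < x₃) (h₄ : 0 < x₄)
    (hK : 0 < K) {c : ℂ} (hc_re : c.re ≤ 0) (hc_im : c.im ≠ 0) :
    (c - x₁) * (c - x₂) * (c - x₃) * (c - x₄) ≠ K := by
  rw [mul_assoc]
  refine mul_ne_ofReal_of_im_mul_pos ?_ hK
  rw [im_sub_ofReal_mul_sub_ofReal, im_sub_ofReal_mul_sub_ofReal]
  have : 0 < c.im * c.im := mul_self_pos.mpr hc_im
  nlinarith [mul_pos (by linarith : 0 < x₁ + x₂ - 2 * c.re) (by linarith : 0 < x₃ + x₄ - 2 * c.re)]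

lemma eq_ofReal_of_prod_sub_eq (h₁ : 0 < x₁) (h₂ : 0 < x₂) (h₃ : 0 < x₃) (h₄ : 0 < x₄)
    {u : ℝ} (hu : u ≤ 0) (hu_eq : (u - x₁) * (u - x₂) * (u - x₃) * (u - x₄) = K)
    {c : ℂ} (hc_re : c.re ≤ 0) (hc_eq : (c - x₁) * (c - x₂) * (c - x₃) * (c - x₄) = K) :
    c = u := by
  have hK : 0 < K := by
    rw [← hu_eq, show (u - x₁) * (u - x₂) * (u - x₃) * (u - x₄) =
      (x₁ - u) * (x₂ - u) * (x₃ - u) * (x₄ - u) by ring]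
    apply_rules [mul_pos] <;> linarith
  by_cases hc_im : c.im = 0
  · have hc : c = (c.re : ℂ) := ext rfl hc_im
    rw [hc] at hc_eq ⊢
    congr 1
    have hc_eq' : (c.re - x₁) * (c.re - x₂) * (c.re - x₃) * (c.re - x₄) = K := by
      exact_mod_cast hc_eq
    exact (strictAntiOn_prod_sub h₁.le h₂.le h₃.le h₄.le).injOn hc_re hu (hc_eq'.trans hu_eq.symm)
  · exact absurd hc_eq (prod_sub_ofReal_ne_ofReal h₁ h₂ h₃ h₄ hK hc_re hc_im)

end Complex

lemma Polynomial.exists_roots_eq_cons_cons {k : Type*} [Field k] [IsAlgClosed k] {P : k[X]}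
    (hP : P.natDegree = 4) {u v : k} (hu : P.IsRoot u) (hv : P.IsRoot v) (huv : u ≠ v) :
    ∃ r₁ r₂, P.roots = u ::ₘ v ::ₘ {r₁, r₂} := by
  have hP₀ : P ≠ 0 := by rintro rfl; simp at hP
  obtain ⟨s, hs⟩ := Multiset.exists_cons_of_mem ((mem_roots hP₀).mpr hu)
  have hv_mem : v ∈ s := by
    have := (mem_roots hP₀).mpr hv
    rw [hs, Multiset.mem_cons] at this
    exact this.resolve_left (Ne.symm huv)
  obtain ⟨t, rfl⟩ := Multiset.exists_cons_of_mem hv_mem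
  have ht : Multiset.card t = 2 := by
    have := IsAlgClosed.card_roots_eq_natDegree (p := P)
    rw [hs, hP] at this
    simpa using this
  obtain ⟨r₁, r₂, rfl⟩ := Multiset.card_eq_two.mp ht
  exact ⟨r₁, r₂, hs⟩

noncomputable def shiftedQuartic (x₁ x₂ x₃ x₄ K : ℝ) : ℂ[X] :=
  (X - C (x₁ : ℂ)) * (X - C (x₂ : ℂ)) * (X - C (x₃ : ℂ)) * (X - C (x₄ : ℂ)) - C (K : ℂ)

section ShiftedQuartic

variable {x₁ x₂ x₃ x₄ K : ℝ}

@[simp]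
lemma eval_shiftedQuartic (z : ℂ) :
    (shiftedQuartic x₁ x₂ x₃ x₄ K).eval z = (z - x₁) * (z - x₂) * (z - x₃) * (z - x₄) - K := by
  simp [shiftedQuartic]

lemma eval_derivative_shiftedQuartic (z : ℂ) :
    (derivative (shiftedQuartic x₁ x₂ x₃ x₄ K)).eval z =
      (z - x₂) * (z - x₃) * (z - x₄) + (z - x₁) * (z - x₃) * (z - x₄) +
        (z - x₁) * (z - x₂) * (z - x₄) + (z - x₁) * (z - x₂) * (z - x₃) := by
  simp only [shiftedQuartic, derivative_mul, derivative_sub, derivative_X, derivative_C,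
    eval_add, eval_mul, eval_sub, eval_X, eval_C, eval_zero, eval_one]
  ring

lemma natDegree_shiftedQuartic : (shiftedQuartic x₁ x₂ x₃ x₄ K).natDegree = 4 := by
  unfold shiftedQuartic
  compute_degree!

lemma monic_shiftedQuartic : (shiftedQuartic x₁ x₂ x₃ x₄ K).Monic := by
  unfold shiftedQuartic
  monicity!

lemma rootMultiplicity_shiftedQuartic_le_one {u : ℝ} (h₁ : u < x₁) (h₂ : u < x₂) (h₃ : u < x₃)
    (h₄ : u < x₄) : (shiftedQuartic x₁ x₂ x₃ x₄ K).rootMultiplicity (u : ℂ) ≤ 1 := by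
  by_contra! h
  have h_deriv := ((one_lt_rootMultiplicity_iff_isRoot monic_shiftedQuartic.ne_zero).mp h).2
  rw [IsRoot, eval_derivative_shiftedQuartic] at h_deriv
  have h_neg : (u - x₂) * (u - x₃) * (u - x₄) + (u - x₁) * (u - x₃) * (u - x₄) +
      (u - x₁) * (u - x₂) * (u - x₄) + (u - x₁) * (u - x₂) * (u - x₃) < 0 := by
    have h₁' := sub_pos.2 h₁
    have h₂' := sub_pos.2 h₂
    have h₃' := sub_pos.2 h₃
    have h₄' := sub_pos.2 h₄
    linarith [mul_pos (mul_pos h₂' h₃') h₄', mul_pos (mul_pos h₁' h₃') h₄',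
      mul_pos (mul_pos h₁' h₂') h₄', mul_pos (mul_pos h₁' h₂') h₃']
  exact h_neg.ne (by exact_mod_cast h_deriv)

end ShiftedQuartic

theorem exists_factorization_prod_sub_ofReal {x₁ x₂ x₃ x₄ K : ℝ} (h₁ : 0 < x₁) (h₂ : 0 < x₂)
    (h₃ : 0 < x₃) (h₄ : 0 < x₄) (hK : x₁ * x₂ * x₃ * x₄ < K) :
    ∃ (r₁ r₂ : ℂ) (u v : ℝ), u < 0 ∧ x₁ < v ∧ x₂ < v ∧ x₃ < v ∧ x₄ < v ∧
      0 < r₁.re ∧ 0 < r₂.re ∧ ∀ z : ℂ,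
        (z - x₁) * (z - x₂) * (z - x₃) * (z - x₄) - K =
          (z - r₁) * (z - r₂) * (z - u) * (z - v) := by
  obtain ⟨u, hu, hu_eq⟩ := exists_neg_prod_sub_eq h₁.le h₂.le h₃.le h₄.le hK
  obtain ⟨v, hv₁, hv₂, hv₃, hv₄, hv_eq⟩ :=
    exists_gt_prod_sub_eq (x₁ := x₁) (x₂ := x₂) (x₃ := x₃) (x₄ := x₄) (K := K)
      ((by apply_rules [mul_pos] : 0 < x₁ * x₂ * x₃ * x₄).trans hK)
  have hu_root : (shiftedQuartic x₁ x₂ x₃ x₄ K).IsRoot u := by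
    rw [IsRoot, eval_shiftedQuartic, sub_eq_zero]; exact_mod_cast hu_eq
  have hv_root : (shiftedQuartic x₁ x₂ x₃ x₄ K).IsRoot v := by
    rw [IsRoot, eval_shiftedQuartic, sub_eq_zero]; exact_mod_cast hv_eq
  obtain ⟨r₁, r₂, h_roots⟩ := exists_roots_eq_cons_cons natDegree_shiftedQuartic hu_root hv_root
    (by exact_mod_cast (by linarith : u ≠ v))
  have hP : shiftedQuartic x₁ x₂ x₃ x₄ K =
      (X - C r₁) * (X - C r₂) * (X - C (u : ℂ)) * (X - C (v : ℂ)) := by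
    rw [← prod_multiset_X_sub_C_of_monic_of_roots_card_eq monic_shiftedQuartic
      (by rw [IsAlgClosed.card_roots_eq_natDegree]), h_roots]
    simp only [Multiset.insert_eq_cons, Multiset.map_cons, Multiset.map_singleton,
      Multiset.prod_cons, Multiset.prod_singleton]
    ring
  have h_mult : (shiftedQuartic x₁ x₂ x₃ x₄ K).rootMultiplicity (u : ℂ) ≤ 1 :=
    rootMultiplicity_shiftedQuartic_le_one (by linarith) (by linarith) (by linarith) (by linarith)
  rw [← count_roots, h_roots] at h_mult
  have h_re : ∀ r ∈ (shiftedQuartic x₁ x₂ x₃ x₄ K).roots, r ≠ u → 0 < r.re := by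
    intro r hr hru
    by_contra! hr_re
    have hr_eq := (mem_roots monic_shiftedQuartic.ne_zero).mp hr
    rw [IsRoot, eval_shiftedQuartic, sub_eq_zero] at hr_eq
    exact hru (Complex.eq_ofReal_of_prod_sub_eq h₁ h₂ h₃ h₄ hu.le hu_eq hr_re hr_eq)
  refine ⟨r₁, r₂, u, v, hu, hv₁, hv₂, hv₃, hv₄, h_re r₁ (by simp [h_roots]) ?_,
    h_re r₂ (by simp [h_roots]) ?_, fun z ↦ ?_⟩
  · rintro rfl; simp at h_mult
  · rintro rfl; simp at h_mult
  · simpa using congrArg (eval z) hP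

theorem stmt19_general (N : ℕ) (a b δ μ D γab ξab X₀ Y₀ Z₀ W₀ : ℝ)
    (ha : max (-2 : ℝ) (-(N : ℝ)) < a) (hb : max (-2 : ℝ) (-(N : ℝ)) < b)
    (hδ : 0 < δ) (hμ : 0 < μ)
    (hD : D = μ * δ - 1) (hDpos : 0 < D)
    (hγ : γab = ((2 + a) + (2 + b) * δ) / D) (hξ : ξab = ((2 + b) + (2 + a) * μ) / D)
    (hcde : (N : ℝ) - 2 < min γab ξab ∨ N ≤ 2)
    (hX : X₀ = γab) (hY : Y₀ = ξab)
    (hZ : Z₀ = (N : ℝ) - 2 - γab) (hW : W₀ = (N : ℝ) - 2 - ξab) :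
    ∃ (lam₁ lam₂ : ℂ) (lam₃ lam₄ : ℝ),
      lam₃ < 0 ∧
      max (max X₀ Y₀) (max |Z₀| |W₀|) < lam₄ ∧
      0 < lam₁.re ∧ 0 < lam₂.re ∧
      ∀ z : ℂ,
        (z - (X₀ : ℂ)) * (z + (Z₀ : ℂ)) * (z - (Y₀ : ℂ)) * (z + (W₀ : ℂ)) -
            (δ : ℂ) * (μ : ℂ) * (X₀ : ℂ) * (Y₀ : ℂ) * (Z₀ : ℂ) * (W₀ : ℂ)
          = (z - lam₁) * (z - lam₂) * (z - (lam₃ : ℂ)) * (z - (lam₄ : ℂ)) := by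
  have ha₂ : -2 < a := (le_max_left _ _).trans_lt ha
  have hb₂ : -2 < b := (le_max_left _ _).trans_lt hb
  have hX₀ : 0 < X₀ := by rw [hX, hγ]; apply div_pos <;> nlinarith
  have hY₀ : 0 < Y₀ := by rw [hY, hξ]; apply div_pos <;> nlinarith
  have hZW : Z₀ < 0 ∧ W₀ < 0 := by
    rcases hcde with h | h
    · rw [lt_min_iff] at h; constructor <;> linarith
    · have : (N : ℝ) ≤ 2 := by exact_mod_cast h
      constructor <;> linarith
  have hK : X₀ * -Z₀ * Y₀ * -W₀ < δ * μ * X₀ * Y₀ * Z₀ * W₀ := by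
    have : 0 < X₀ * Y₀ * Z₀ * W₀ := by
      have := mul_pos (mul_pos hX₀ hY₀) (mul_pos_of_neg_of_neg hZW.1 hZW.2); linarith
    nlinarith
  obtain ⟨r₁, r₂, u, v, hu, hv₁, hv₂, hv₃, hv₄, hr₁, hr₂, h_eq⟩ :=
    exists_factorization_prod_sub_ofReal hX₀ (neg_pos.mpr hZW.1) hY₀ (neg_pos.mpr hZW.2) hK
  refine ⟨r₁, r₂, u, v, hu, ?_, hr₁, hr₂, fun z ↦ ?_⟩
  · rw [abs_of_neg hZW.1, abs_of_neg hZW.2]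
    exact max_lt (max_lt hv₁ hv₃) (max_lt hv₂ hv₄)
  · convert h_eq z using 2 <;> push_cast <;> ring

theorem stmt19 (N : ℕ) (hN : 1 ≤ N) (a b δ μ D γab ξab X₀ Y₀ Z₀ W₀ : ℝ)
    (ha : max (-2 : ℝ) (-(N : ℝ)) < a) (hb : max (-2 : ℝ) (-(N : ℝ)) < b)
    (hδ : 0 < δ) (hμ : 0 < μ)
    (hD : D = μ * δ - 1) (hDpos : 0 < D)
    (hγ : γab = ((2 + a) + (2 + b) * δ) / D) (hξ : ξab = ((2 + b) + (2 + a) * μ) / D)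
    (hcde : (N : ℝ) - 2 < min γab ξab ∨ N ≤ 2)
    (hX : X₀ = γab) (hY : Y₀ = ξab)
    (hZ : Z₀ = (N : ℝ) - 2 - γab) (hW : W₀ = (N : ℝ) - 2 - ξab) :
    ∃ (lam₁ lam₂ : ℂ) (lam₃ lam₄ : ℝ),
      lam₃ < 0 ∧
      max (max X₀ Y₀) (max |Z₀| |W₀|) < lam₄ ∧
      0 < lam₁.re ∧ 0 < lam₂.re ∧
      ∀ z : ℂ,
        (z - (X₀ : ℂ)) * (z + (Z₀ : ℂ)) * (z - (Y₀ : ℂ)) * (z + (W₀ : ℂ)) -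
            (δ : ℂ) * (μ : ℂ) * (X₀ : ℂ) * (Y₀ : ℂ) * (Z₀ : ℂ) * (W₀ : ℂ)
          = (z - lam₁) * (z - lam₂) * (z - (lam₃ : ℂ)) * (z - (lam₄ : ℂ)) :=
  stmt19_general N a b δ μ D γab ξab X₀ Y₀ Z₀ W₀ ha hb hδ hμ hD hDpos hγ hξ hcde hX hY hZ hW
end
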